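/- arXiv:1111.2974 — 7 statements merged into one kernel-verified Lean document; each statement's English description precedes it below -/
import Mathlib

section
/- Let P(λ) = Σ_{j=0}^{k} A_j φ_j(λ) be a regular n×n complex matrix polynomial of degree k expressed in a polynomial basis {φ_0,…,φ_k} such that φ_0,…,φ_{k−1} are linearly independent polynomials of degree at most k−1, and let c_{k−1} ≠ 0 be the leading coefficient of φ_{k−1}. Let L(λ) = λX + Y with X, Y ∈ ℂ^{kn×kn} belong to the ansatz space 𝓛₁, i.e. there exists v ∈ ℂ^k with L(λ)·(Φ(λ)⊗I_n) = c_{k−1} v ⊗ P(λ), where Φ(λ) = (φ_0(λ),…,φ_{k−1}(λ))^T. Then the following are equivalent: (i) L is a linearization of P; (ii) L is a strong linearization of P; (iii) L is regular. -/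
open Matrix Polynomial

/-- `diag(P, I_{(k-1)n})`, indexed by `Fin k × Fin n`: the `(0,0)` block (in the block
index) carries `P`, and the rest is the identity. -/
noncomputable def diagPI {n k : ℕ} (P : Matrix (Fin n) (Fin n) (Polynomial ℂ)) :
    Matrix (Fin k × Fin n) (Fin k × Fin n) (Polynomial ℂ) :=
  Matrix.of fun p q =>
    if p.1.val = 0 ∧ q.1.val = 0 then P p.2 q.2 else if p = q then 1 else 0

/-- `L` is a linearization of the `n×n` matrix polynomial `P` of degree `k`:
there are unimodular matrix polynomials `E, F` (i.e. with determinant a nonzero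
constant, equivalently a unit of `ℂ[λ]`) such that `E·L·F = diag(P, I_{(k-1)n})`. -/
def IsLinearization {n k : ℕ} (L : Matrix (Fin k × Fin n) (Fin k × Fin n) (Polynomial ℂ))
    (P : Matrix (Fin n) (Fin n) (Polynomial ℂ)) : Prop :=
  ∃ E F : Matrix (Fin k × Fin n) (Fin k × Fin n) (Polynomial ℂ),
    IsUnit E.det ∧ IsUnit F.det ∧ E * L * F = diagPI P

namespace StrongLin

/-- two-point sum collapse -/
lemma sum_two {α M : Type*} [Fintype α] [DecidableEq α] [AddCommMonoid M]
    (f : α → M) (a b : α) (hab : a ≠ b) (h : ∀ x, x ≠ a → x ≠ b → f x = 0) :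
    ∑ x, f x = f a + f b := by
  classical
  rw [← Finset.sum_subset (Finset.subset_univ ({a, b} : Finset α))]
  · rw [Finset.sum_pair hab]
  · intro x _ hx
    simp only [Finset.mem_insert, Finset.mem_singleton, not_or] at hx
    exact h x hx.1 hx.2

/-- one-point sum collapse -/
lemma sum_one {α M : Type*} [Fintype α] [DecidableEq α] [AddCommMonoid M]
    (f : α → M) (a : α) (h : ∀ x, x ≠ a → f x = 0) :
    ∑ x, f x = f a :=
  Fintype.sum_eq_single a h

/-- The monomial tensor `Λ(λ) ⊗ Iₙ`, with `Λ = (1, λ, …, λ^{k-1})ᵀ`. -/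
noncomputable def lamM (k n : ℕ) : Matrix (Fin k × Fin n) (Fin n) (Polynomial ℂ) :=
  Matrix.of fun p b => if p.2 = b then Polynomial.X ^ (p.1 : ℕ) else 0

/-- a pencil times a constant matrix is a pencil -/
lemma pencil_mul_const {ι : Type*} [Fintype ι] [DecidableEq ι]
    (Xm Ym Bc : Matrix ι ι ℂ) :
    ((Matrix.of fun p q => C (Xm p q) * X + C (Ym p q)) : Matrix ι ι (Polynomial ℂ)) *
        Bc.map C
      = Matrix.of fun p q => C ((Xm * Bc) p q) * X + C ((Ym * Bc) p q) := by
  refine Matrix.ext fun p q => ?_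
  simp only [Matrix.mul_apply, Matrix.of_apply, Matrix.map_apply]
  rw [map_sum (Polynomial.C (R := ℂ)), map_sum (Polynomial.C (R := ℂ)), Finset.sum_mul,
    ← Finset.sum_add_distrib]
  exact Finset.sum_congr rfl fun r _ => by rw [Polynomial.C_mul, Polynomial.C_mul]; ring

/-- a constant matrix times a pencil is a pencil -/
lemma const_mul_pencil {ι : Type*} [Fintype ι] [DecidableEq ι]
    (Bc Xm Ym : Matrix ι ι ℂ) :
    Bc.map C *
        ((Matrix.of fun p q => C (Xm p q) * X + C (Ym p q)) : Matrix ι ι (Polynomial ℂ))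
      = Matrix.of fun p q => C ((Bc * Xm) p q) * X + C ((Bc * Ym) p q) := by
  refine Matrix.ext fun p q => ?_
  simp only [Matrix.mul_apply, Matrix.of_apply, Matrix.map_apply]
  rw [map_sum (Polynomial.C (R := ℂ)), map_sum (Polynomial.C (R := ℂ)), Finset.sum_mul,
    ← Finset.sum_add_distrib]
  exact Finset.sum_congr rfl fun r _ => by rw [Polynomial.C_mul, Polynomial.C_mul]; ring

/-- coefficient extraction for a vanishing pencil-row against monomials -/
lemma row_coeff {k : ℕ} (x y : Fin k → ℂ)
    (h : ∑ j : Fin k, (C (x j) * X + C (y j)) * X ^ (j : ℕ) = 0) (m : ℕ) :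
    (∑ j : Fin k, if m = (j : ℕ) + 1 then x j else 0)
      + (∑ j : Fin k, if m = (j : ℕ) then y j else 0) = 0 := by
  have hc := congrArg (fun p => Polynomial.coeff p m) h
  simp only [Polynomial.coeff_zero] at hc
  rw [Polynomial.finset_sum_coeff] at hc
  rw [← Finset.sum_add_distrib]
  refine Eq.trans ?_ hc
  refine Finset.sum_congr rfl fun j _ => ?_
  have hrw : (C (x j) * X + C (y j)) * X ^ (j : ℕ)
      = C (x j) * X ^ ((j : ℕ) + 1) + C (y j) * X ^ (j : ℕ) := by ring
  rw [hrw, Polynomial.coeff_add, Polynomial.coeff_C_mul, Polynomial.coeff_C_mul,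
    Polynomial.coeff_X_pow, Polynomial.coeff_X_pow]
  simp [mul_ite]

/-- reflect of a finite sum -/
lemma reflect_sum {ι : Type*} (s : Finset ι) (N : ℕ) (f : ι → Polynomial ℂ) :
    Polynomial.reflect N (∑ i ∈ s, f i) = ∑ i ∈ s, Polynomial.reflect N (f i) := by
  classical
  induction s using Finset.cons_induction with
  | empty => simp [Polynomial.reflect_zero]
  | cons a s ha ih =>
    rw [Finset.sum_cons, Finset.sum_cons, Polynomial.reflect_add, ih]

lemma reflect_injective {N : ℕ} {f : Polynomial ℂ} (h : Polynomial.reflect N f = 0) :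
    f = 0 := by
  ext m
  have := congrArg (fun p => Polynomial.coeff p (Polynomial.revAt N m)) h
  simpa [Polynomial.coeff_reflect, Polynomial.revAt_invol] using this

lemma reflect_smul (N : ℕ) (z : ℤˣ) (f : Polynomial ℂ) :
    Polynomial.reflect N (z • f) = z • Polynomial.reflect N f := by
  ext m
  simp [Polynomial.coeff_reflect, Polynomial.coeff_smul]

lemma reflect_prod {ι : Type*} [DecidableEq ι] (s : Finset ι) (f : ι → Polynomial ℂ)
    (hf : ∀ i ∈ s, (f i).natDegree ≤ 1) :
    Polynomial.reflect s.card (∏ i ∈ s, f i) = ∏ i ∈ s, Polynomial.reflect 1 (f i) := by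
  induction s using Finset.cons_induction with
  | empty => simp
  | cons a s ha ih =>
    have hdeg : (∏ i ∈ s, f i).natDegree ≤ s.card := by
      refine le_trans (Polynomial.natDegree_prod_le s f) ?_
      calc ∑ i ∈ s, (f i).natDegree ≤ ∑ _i ∈ s, 1 :=
            Finset.sum_le_sum fun i hi => hf i (Finset.mem_cons_of_mem hi)
        _ = s.card := by simp
    rw [Finset.prod_cons, Finset.prod_cons, Finset.card_cons, add_comm s.card 1,
      Polynomial.reflect_mul (f a) (∏ i ∈ s, f i) (hf a (Finset.mem_cons_self a s)) hdeg,
      ih fun i hi => hf i (Finset.mem_cons_of_mem hi)]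

/-- determinant of the reversed pencil is the reflection of the determinant -/
lemma det_rev_pencil {ι : Type*} [Fintype ι] [DecidableEq ι]
    (Xm Ym : Matrix ι ι ℂ) :
    ((Matrix.of fun p q => C (Ym p q) * X + C (Xm p q)) : Matrix ι ι (Polynomial ℂ)).det
      = Polynomial.reflect (Fintype.card ι)
        ((Matrix.of fun p q => C (Xm p q) * X + C (Ym p q)) : Matrix ι ι (Polynomial ℂ)).det := by
  have entry : ∀ a b : ℂ, Polynomial.reflect 1 (C a * X + C b) = C b * X + C a := by
    intro a b
    have e1 : (C a * X + C b : Polynomial ℂ) = C a * X ^ 1 + C b * X ^ 0 := by ring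
    rw [e1, Polynomial.reflect_add, Polynomial.reflect_C_mul_X_pow,
      Polynomial.reflect_C_mul_X_pow, Polynomial.revAt_le (by norm_num),
      Polynomial.revAt_le (by norm_num)]
    ring
  rw [Matrix.det_apply, Matrix.det_apply, reflect_sum]
  refine Finset.sum_congr rfl fun σ _ => ?_
  rw [reflect_smul]
  congr 1
  calc (∏ i : ι, (Matrix.of fun p q => C (Ym p q) * X + C (Xm p q)) (σ i) i)
      = ∏ i : ι, Polynomial.reflect 1
          ((Matrix.of fun p q => C (Xm p q) * X + C (Ym p q)) (σ i) i) := by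
        refine Finset.prod_congr rfl fun i _ => ?_
        simp only [Matrix.of_apply]
        exact (entry _ _).symm
    _ = Polynomial.reflect (Fintype.card ι)
          (∏ i : ι, (Matrix.of fun p q => C (Xm p q) * X + C (Ym p q)) (σ i) i) := by
        rw [← Finset.card_univ]
        exact (reflect_prod Finset.univ _ fun i _ => by
          simp only [Matrix.of_apply]
          refine le_trans (Polynomial.natDegree_add_le _ _) ?_
          simp only [Polynomial.natDegree_C, max_le_iff]
          exact ⟨le_trans (Polynomial.natDegree_mul_le)
            (by simp [Polynomial.natDegree_C, Polynomial.natDegree_X]), Nat.zero_le _⟩).symm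

section Core

variable {k n : ℕ}

lemma fin_ne {k : ℕ} {a b : Fin k} (hv : (a : ℕ) ≠ (b : ℕ)) : a ≠ b :=
  fun e => hv (by rw [e])

/-- scalar entries of the unimodular column-operations matrix `F`:
column `0` is `Λ`, column `j ≥ 1` is `-λ^{i-j}` for `i ≥ j`. -/
noncomputable def fent (i j : Fin k) : Polynomial ℂ :=
  if (j : ℕ) = 0 then X ^ (i : ℕ)
  else if (j : ℕ) ≤ (i : ℕ) then -X ^ ((i : ℕ) - (j : ℕ)) else 0

/-- scalar entries of the inverse of `F`. -/
noncomputable def fient (i j : Fin k) : Polynomial ℂ :=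
  (if i = j then (if (j : ℕ) = 0 then 1 else -1) else 0)
    + (if (i : ℕ) = (j : ℕ) + 1 then X else 0)

/-- scalar entries of the non-trivial rows of `G`. -/
noncomputable def gent (i j : Fin k) : Polynomial ℂ :=
  (if (j : ℕ) + 1 = (i : ℕ) then X else 0) + (if j = i then -1 else 0)

lemma fent_key (i j : Fin k) :
    ∑ r : Fin k, fent i r * fient r j = if i = j then 1 else 0 := by
  by_cases hj1 : (j : ℕ) + 1 < k
  · rw [sum_two _ j ⟨(j : ℕ) + 1, hj1⟩ (fin_ne (by simp))]
    · have h1 : fient j j = (if (j : ℕ) = 0 then 1 else -1) := by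
        simp [fient]
      have h2 : fient ⟨(j : ℕ) + 1, hj1⟩ j = X := by
        simp [fient, Fin.ext_iff]
      rw [h1, h2]
      rcases Nat.eq_zero_or_pos (j : ℕ) with hj0 | hj0
      · rcases Nat.eq_zero_or_pos (i : ℕ) with hi0 | hi0
        · have : i = j := by apply Fin.ext; omega
          simp [this, fent, hj0]
        · have e1 : fent i j = X ^ (i : ℕ) := by simp [fent, hj0]
          have e2 : fent i ⟨(j : ℕ) + 1, hj1⟩ = -X ^ ((i : ℕ) - 1) := by
            simp only [fent]
            rw [if_neg (show ¬((j : ℕ) + 1 = 0) by omega),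
              if_pos (show (j : ℕ) + 1 ≤ (i : ℕ) by omega)]
            rw [show (i : ℕ) - ((j : ℕ) + 1) = (i : ℕ) - 1 by omega]
          have harith : (i : ℕ) - 1 + 1 = (i : ℕ) := by omega
          rw [e1, e2, if_neg (fin_ne (by omega)), if_pos hj0]
          simp only [mul_one, mul_neg, neg_mul, neg_neg, ← pow_succ, harith]
          ring
      · rw [if_neg (by omega)]
        rcases lt_trichotomy (i : ℕ) (j : ℕ) with hij | hij | hij
        · have e1 : fent i j = 0 := by
            simp only [fent]; rw [if_neg (by omega), if_neg (by omega)]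
          have e2 : fent i ⟨(j : ℕ) + 1, hj1⟩ = 0 := by
            simp only [fent]
            rw [if_neg (show ¬((j : ℕ) + 1 = 0) by omega),
              if_neg (show ¬((j : ℕ) + 1 ≤ (i : ℕ)) by omega)]
          rw [e1, e2, if_neg (fin_ne (by omega))]
          ring
        · have hijf : i = j := Fin.ext hij
          have e1 : fent i j = -X ^ 0 := by
            simp only [fent]; rw [if_neg (by omega), if_pos (by omega)]
            rw [show (i : ℕ) - (j : ℕ) = 0 by omega]
          have e2 : fent i ⟨(j : ℕ) + 1, hj1⟩ = 0 := by
            simp only [fent]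
            rw [if_neg (show ¬((j : ℕ) + 1 = 0) by omega),
              if_neg (show ¬((j : ℕ) + 1 ≤ (i : ℕ)) by omega)]
          rw [e1, e2, if_pos hijf]
          ring
        · have e1 : fent i j = -X ^ ((i : ℕ) - (j : ℕ)) := by
            simp only [fent]; rw [if_neg (by omega), if_pos (by omega)]
          have e2 : fent i ⟨(j : ℕ) + 1, hj1⟩ = -X ^ ((i : ℕ) - ((j : ℕ) + 1)) := by
            simp only [fent]
            rw [if_neg (show ¬((j : ℕ) + 1 = 0) by omega),
              if_pos (show (j : ℕ) + 1 ≤ (i : ℕ) by omega)]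
          have harith : (i : ℕ) - ((j : ℕ) + 1) + 1 = (i : ℕ) - (j : ℕ) := by omega
          rw [e1, e2, if_neg (fin_ne (by omega))]
          simp only [mul_one, mul_neg, neg_mul, neg_neg, ← pow_succ, harith]
          ring
    · intro r hr hr'
      have hv : (r : ℕ) ≠ (j : ℕ) + 1 := fun e => hr' (Fin.ext e)
      have : fient r j = 0 := by
        simp only [fient]
        rw [if_neg hr, if_neg hv]
        ring
      rw [this, mul_zero]
  · -- j is the top index: single term
    rw [sum_one _ j]
    · have h1 : fient j j = (if (j : ℕ) = 0 then 1 else -1) := by simp [fient]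
      rw [h1]
      rcases Nat.eq_zero_or_pos (j : ℕ) with hj0 | hj0
      · have : i = j := by
          apply Fin.ext; have := i.isLt; omega
        simp [this, fent, hj0]
      · rw [if_neg (by omega)]
        rcases lt_trichotomy (i : ℕ) (j : ℕ) with hij | hij | hij
        · have e1 : fent i j = 0 := by
            simp only [fent]; rw [if_neg (by omega), if_neg (by omega)]
          rw [e1, if_neg (fin_ne (by omega))]
          ring
        · have e1 : fent i j = -X ^ 0 := by
            simp only [fent]; rw [if_neg (by omega), if_pos (by omega)]
            rw [show (i : ℕ) - (j : ℕ) = 0 by omega]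
          rw [e1, if_pos (Fin.ext hij)]
          ring
        · exact absurd i.isLt (by omega)
    · intro r hr
      have hv : (r : ℕ) ≠ (j : ℕ) + 1 := by have := r.isLt; omega
      have : fient r j = 0 := by
        simp only [fient]
        rw [if_neg hr, if_neg hv]
        ring
      rw [this, mul_zero]

lemma gent_key (i j : Fin k) (hi : (i : ℕ) ≠ 0) :
    ∑ r : Fin k, gent i r * fent r j = if i = j then 1 else 0 := by
  have hi1 : (i : ℕ) - 1 < k := lt_of_le_of_lt (Nat.sub_le _ _) i.isLt
  have hne : (⟨(i : ℕ) - 1, hi1⟩ : Fin k) ≠ i := fin_ne (by simp; omega)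
  rw [sum_two _ ⟨(i : ℕ) - 1, hi1⟩ i hne]
  · have h1 : gent i ⟨(i : ℕ) - 1, hi1⟩ = X := by
      simp only [gent]
      rw [if_pos (show (i : ℕ) - 1 + 1 = (i : ℕ) by omega), if_neg hne]
      ring
    have h2 : gent i i = -1 := by simp [gent]
    rw [h1, h2]
    rcases Nat.eq_zero_or_pos (j : ℕ) with hj0 | hj0
    · have e1 : fent (⟨(i : ℕ) - 1, hi1⟩ : Fin k) j = X ^ ((i : ℕ) - 1) := by
        simp only [fent]; rw [if_pos hj0]
      have e2 : fent i j = X ^ (i : ℕ) := by simp only [fent]; rw [if_pos hj0]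
      have harith : (i : ℕ) - 1 + 1 = (i : ℕ) := by omega
      have hp : (X : Polynomial ℂ) * X ^ ((i : ℕ) - 1) = X ^ (i : ℕ) := by
        rw [← pow_succ', harith]
      rw [e1, e2, if_neg (fin_ne (by omega)), hp]
      ring
    · rcases lt_trichotomy (i : ℕ) (j : ℕ) with hij | hij | hij
      · have e1 : fent (⟨(i : ℕ) - 1, hi1⟩ : Fin k) j = 0 := by
          simp only [fent]
          rw [if_neg (by omega), if_neg (show ¬((j : ℕ) ≤ (i : ℕ) - 1) by omega)]
        have e2 : fent i j = 0 := by
          simp only [fent]; rw [if_neg (by omega), if_neg (by omega)]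
        rw [e1, e2, if_neg (fin_ne (by omega))]
        ring
      · have e1 : fent (⟨(i : ℕ) - 1, hi1⟩ : Fin k) j = 0 := by
          simp only [fent]
          rw [if_neg (by omega), if_neg (show ¬((j : ℕ) ≤ (i : ℕ) - 1) by omega)]
        have e2 : fent i j = -X ^ 0 := by
          simp only [fent]; rw [if_neg (by omega), if_pos (by omega)]
          rw [show (i : ℕ) - (j : ℕ) = 0 by omega]
        rw [e1, e2, if_pos (Fin.ext hij)]
        ring
      · have e1 : fent (⟨(i : ℕ) - 1, hi1⟩ : Fin k) j = -X ^ ((i : ℕ) - 1 - (j : ℕ)) := by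
          simp only [fent]
          rw [if_neg (by omega), if_pos (show (j : ℕ) ≤ (i : ℕ) - 1 by omega)]
        have e2 : fent i j = -X ^ ((i : ℕ) - (j : ℕ)) := by
          simp only [fent]; rw [if_neg (by omega), if_pos (by omega)]
        have harith : (i : ℕ) - 1 - (j : ℕ) + 1 = (i : ℕ) - (j : ℕ) := by omega
        have hp : (X : Polynomial ℂ) * X ^ ((i : ℕ) - 1 - (j : ℕ)) = X ^ ((i : ℕ) - (j : ℕ)) := by
          rw [← pow_succ', harith]
        rw [e1, e2, if_neg (fin_ne (by omega)), mul_neg, hp]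
        ring
  · intro r hr hr'
    have hrv : (r : ℕ) ≠ (i : ℕ) - 1 := fun e => hr (Fin.ext e)
    have : gent i r = 0 := by
      simp only [gent]
      rw [if_neg (by omega), if_neg hr']
      ring
    rw [this, zero_mul]

end Core

section Mats

variable {k n : ℕ}

/-- collapse for products of `Fin k`-kronecker-type matrices -/
lemma kron_mul_apply (f g : Fin k → Fin k → Polynomial ℂ) (p q : Fin k × Fin n) :
    (∑ r : Fin k × Fin n,
        (if p.2 = r.2 then f p.1 r.1 else 0) * (if r.2 = q.2 then g r.1 q.1 else 0))
      = if p.2 = q.2 then ∑ r1 : Fin k, f p.1 r1 * g r1 q.1 else 0 := by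
  rw [Fintype.sum_prod_type]
  by_cases hpq : p.2 = q.2
  · rw [if_pos hpq]
    refine Finset.sum_congr rfl fun r1 _ => ?_
    rw [sum_one _ p.2]
    · rw [if_pos rfl, if_pos hpq]
    · intro r2 hr2
      rw [if_neg (fun e => hr2 e.symm), zero_mul]
  · rw [if_neg hpq]
    refine Finset.sum_eq_zero fun r1 _ => Finset.sum_eq_zero fun r2 _ => ?_
    by_cases h2 : p.2 = r2
    · rw [if_neg (fun e => hpq (h2.trans e)), mul_zero]
    · rw [if_neg h2, zero_mul]

/-- the unimodular matrix `F` of column operations -/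
noncomputable def Fm (k n : ℕ) : Matrix (Fin k × Fin n) (Fin k × Fin n) (Polynomial ℂ) :=
  Matrix.of fun p q => if p.2 = q.2 then fent p.1 q.1 else 0

/-- the inverse of `F` -/
noncomputable def Fiv (k n : ℕ) : Matrix (Fin k × Fin n) (Fin k × Fin n) (Polynomial ℂ) :=
  Matrix.of fun p q => if p.2 = q.2 then fient p.1 q.1 else 0

/-- the matrix `G` built from the pencil: row block `0` is the row block `0` of `L`,
and the other rows implement `λ·(shift) - id`. -/
noncomputable def Gw (k n : ℕ) (L : Matrix (Fin k × Fin n) (Fin k × Fin n) (Polynomial ℂ)) :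
    Matrix (Fin k × Fin n) (Fin k × Fin n) (Polynomial ℂ) :=
  Matrix.of fun r q => if (r.1 : ℕ) = 0 then L r q
    else if r.2 = q.2 then gent r.1 q.1 else 0

/-- the constant matrix `Z` (with identity block row/column `0`) extracted from `X`. -/
noncomputable def Zw (k n : ℕ) (Xm : Matrix (Fin k × Fin n) (Fin k × Fin n) ℂ) :
    Matrix (Fin k × Fin n) (Fin k × Fin n) ℂ :=
  Matrix.of fun p r =>
    if (p.1 : ℕ) = 0 ∨ (r.1 : ℕ) = 0 then (if p = r then 1 else 0)
    else Xm p (⟨(r.1 : ℕ) - 1, lt_of_le_of_lt (Nat.sub_le _ _) r.1.isLt⟩, r.2)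

lemma if_one_eq (p q : Fin k × Fin n) :
    (if p.2 = q.2 then (if p.1 = q.1 then (1 : Polynomial ℂ) else 0) else 0)
      = (1 : Matrix (Fin k × Fin n) (Fin k × Fin n) (Polynomial ℂ)) p q := by
  rw [Matrix.one_apply]
  by_cases h2 : p.2 = q.2
  · by_cases h1 : p.1 = q.1
    · rw [if_pos h2, if_pos h1, if_pos (Prod.ext h1 h2)]
    · rw [if_pos h2, if_neg h1, if_neg (fun e => h1 (congrArg Prod.fst e))]
  · rw [if_neg h2, if_neg (fun e => h2 (congrArg Prod.snd e))]

lemma Fm_mul_Fiv (k n : ℕ) : Fm k n * Fiv k n = 1 := by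
  refine Matrix.ext fun p q => ?_
  rw [Matrix.mul_apply]
  have h : ∀ r : Fin k × Fin n, Fm k n p r * Fiv k n r q
      = (if p.2 = r.2 then fent p.1 r.1 else 0) * (if r.2 = q.2 then fient r.1 q.1 else 0) :=
    fun r => rfl
  rw [Finset.sum_congr rfl fun r _ => h r, kron_mul_apply]
  rw [← if_one_eq p q]
  by_cases h2 : p.2 = q.2
  · rw [if_pos h2, if_pos h2, fent_key]
  · rw [if_neg h2, if_neg h2]

lemma Gw_mul_Fm_delta (L : Matrix (Fin k × Fin n) (Fin k × Fin n) (Polynomial ℂ))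
    (p q : Fin k × Fin n) (hp : (p.1 : ℕ) ≠ 0) :
    (Gw k n L * Fm k n) p q = if p = q then 1 else 0 := by
  rw [Matrix.mul_apply]
  have h : ∀ r : Fin k × Fin n, Gw k n L p r * Fm k n r q
      = (if p.2 = r.2 then gent p.1 r.1 else 0) * (if r.2 = q.2 then fent r.1 q.1 else 0) := by
    intro r
    simp only [Gw, Fm, Matrix.of_apply, if_neg hp]
  rw [Finset.sum_congr rfl fun r _ => h r, kron_mul_apply]
  rw [show (if p = q then (1 : Polynomial ℂ) else 0) = (1 : Matrix (Fin k × Fin n) (Fin k × Fin n) (Polynomial ℂ)) p q from (Matrix.one_apply).symm, ← if_one_eq p q]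
  by_cases h2 : p.2 = q.2
  · rw [if_pos h2, if_pos h2, gent_key _ _ hp]
  · rw [if_neg h2, if_neg h2]

lemma Gw_mul_Fm_P (L : Matrix (Fin k × Fin n) (Fin k × Fin n) (Polynomial ℂ))
    (P : Matrix (Fin n) (Fin n) (Polynomial ℂ))
    (hans : L * lamM k n
      = Matrix.of fun p b => if (p.1 : ℕ) = 0 then P p.2 b else 0)
    (p q : Fin k × Fin n) (hp : (p.1 : ℕ) = 0) (hq : (q.1 : ℕ) = 0) :
    (Gw k n L * Fm k n) p q = P p.2 q.2 := by
  rw [Matrix.mul_apply]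
  have h : ∀ r : Fin k × Fin n, Gw k n L p r * Fm k n r q
      = L p r * lamM k n r q.2 := by
    intro r
    simp only [Gw, Fm, lamM, Matrix.of_apply, if_pos hp, fent, if_pos hq]
  rw [Finset.sum_congr rfl fun r _ => h r, ← Matrix.mul_apply, hans]
  simp [hp]

/-- the row-operations matrix clearing the top-right block of `[[P, R],[0, I]]` -/
noncomputable def E2 (k n : ℕ) (R : Matrix (Fin k × Fin n) (Fin k × Fin n) (Polynomial ℂ)) :
    Matrix (Fin k × Fin n) (Fin k × Fin n) (Polynomial ℂ) :=
  Matrix.of fun p q => (if p = q then 1 else 0)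
    + (if (p.1 : ℕ) = 0 ∧ (q.1 : ℕ) ≠ 0 then -R p q else 0)

noncomputable def E2' (k n : ℕ) (R : Matrix (Fin k × Fin n) (Fin k × Fin n) (Polynomial ℂ)) :
    Matrix (Fin k × Fin n) (Fin k × Fin n) (Polynomial ℂ) :=
  Matrix.of fun p q => (if p = q then 1 else 0)
    + (if (p.1 : ℕ) = 0 ∧ (q.1 : ℕ) ≠ 0 then R p q else 0)

lemma E2_mul_apply (R M : Matrix (Fin k × Fin n) (Fin k × Fin n) (Polynomial ℂ))
    (p q : Fin k × Fin n) :
    (E2 k n R * M) p q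
      = M p q + ∑ r : Fin k × Fin n,
          (if (p.1 : ℕ) = 0 ∧ (r.1 : ℕ) ≠ 0 then -R p r * M r q else 0) := by
  rw [Matrix.mul_apply]
  have h : ∀ r, E2 k n R p r * M r q
      = (if p = r then M r q else 0)
        + (if (p.1 : ℕ) = 0 ∧ (r.1 : ℕ) ≠ 0 then -R p r * M r q else 0) := by
    intro r
    simp only [E2, Matrix.of_apply, add_mul, ite_mul, one_mul, zero_mul, neg_mul]
  rw [Finset.sum_congr rfl fun r _ => h r, Finset.sum_add_distrib]
  congr 1
  rw [sum_one _ p]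
  · rw [if_pos rfl]
  · intro r hr
    rw [if_neg (fun e => hr (e.symm))]

lemma pair_eq {k n : ℕ} {a c : Fin k} {b d : Fin n} (h1 : a = c) (h2 : b = d) :
    (a, b) = ((c, d) : Fin k × Fin n) := by rw [h1, h2]

lemma E2'_apply (R : Matrix (Fin k × Fin n) (Fin k × Fin n) (Polynomial ℂ))
    (p q : Fin k × Fin n) :
    E2' k n R p q = (if p = q then 1 else 0)
      + (if (p.1 : ℕ) = 0 ∧ (q.1 : ℕ) ≠ 0 then R p q else 0) := rfl

lemma Gw_apply (L : Matrix (Fin k × Fin n) (Fin k × Fin n) (Polynomial ℂ))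
    (r q : Fin k × Fin n) :
    Gw k n L r q = if (r.1 : ℕ) = 0 then L r q
      else if r.2 = q.2 then gent r.1 q.1 else 0 := rfl

lemma Zw_apply (Xm : Matrix (Fin k × Fin n) (Fin k × Fin n) ℂ) (p r : Fin k × Fin n) :
    Zw k n Xm p r = if (p.1 : ℕ) = 0 ∨ (r.1 : ℕ) = 0 then (if p = r then 1 else 0)
      else Xm p (⟨(r.1 : ℕ) - 1, lt_of_le_of_lt (Nat.sub_le _ _) r.1.isLt⟩, r.2) := rfl

lemma gent_apply (i j : Fin k) :
    gent i j = (if (j : ℕ) + 1 = (i : ℕ) then X else 0) + (if j = i then -1 else 0) := rfl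

lemma E2_mul_E2' (R : Matrix (Fin k × Fin n) (Fin k × Fin n) (Polynomial ℂ)) :
    E2 k n R * E2' k n R = 1 := by
  refine Matrix.ext fun p q => ?_
  rw [E2_mul_apply]
  rw [sum_one _ q]
  · have hqq : E2' k n R q q = 1 := by
      rw [E2'_apply, if_pos rfl, if_neg (fun hx : (q.1 : ℕ) = 0 ∧ (q.1 : ℕ) ≠ 0 => hx.2 hx.1),
        add_zero]
    rw [E2'_apply, Matrix.one_apply]
    by_cases hq : (p.1 : ℕ) = 0 ∧ (q.1 : ℕ) ≠ 0
    · rw [if_pos hq, if_pos hq, hqq, mul_one]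
      ring
    · rw [if_neg hq, if_neg hq, add_zero, add_zero]
  · intro r hr
    by_cases hc : (p.1 : ℕ) = 0 ∧ (r.1 : ℕ) ≠ 0
    · have hrq : E2' k n R r q = if r = q then 1 else 0 := by
        rw [E2'_apply, if_neg (fun hx : (r.1 : ℕ) = 0 ∧ (q.1 : ℕ) ≠ 0 => hc.2 hx.1), add_zero]
      rw [if_pos hc, hrq, if_neg hr, mul_zero]
    · rw [if_neg hc]

lemma E2_mul_diag (R : Matrix (Fin k × Fin n) (Fin k × Fin n) (Polynomial ℂ))
    (P : Matrix (Fin n) (Fin n) (Polynomial ℂ))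
    (hR : ∀ p q : Fin k × Fin n, (p.1 : ℕ) ≠ 0 → R p q = if p = q then 1 else 0)
    (hR0 : ∀ p q : Fin k × Fin n, (p.1 : ℕ) = 0 → (q.1 : ℕ) = 0 → R p q = P p.2 q.2) :
    E2 k n R * R = diagPI P := by
  refine Matrix.ext fun p q => ?_
  rw [E2_mul_apply]
  rw [sum_one _ q]
  · have hd : diagPI P p q
        = if (p.1 : ℕ) = 0 ∧ (q.1 : ℕ) = 0 then P p.2 q.2 else if p = q then 1 else 0 := rfl
    rw [hd]
    by_cases hp : (p.1 : ℕ) = 0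
    · by_cases hq : (q.1 : ℕ) = 0
      · rw [if_neg (fun hx : (p.1 : ℕ) = 0 ∧ (q.1 : ℕ) ≠ 0 => hx.2 hq), add_zero,
          if_pos ⟨hp, hq⟩, hR0 p q hp hq]
      · rw [if_pos ⟨hp, hq⟩, hR q q hq, if_pos rfl, mul_one,
          if_neg (fun hx : (p.1 : ℕ) = 0 ∧ (q.1 : ℕ) = 0 => hq hx.2),
          if_neg (fun e : p = q => hq (by rw [← e]; exact hp))]
        ring
    · rw [if_neg (fun hx : (p.1 : ℕ) = 0 ∧ (q.1 : ℕ) ≠ 0 => hp hx.1), add_zero, hR p q hp,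
        if_neg (fun hx : (p.1 : ℕ) = 0 ∧ (q.1 : ℕ) = 0 => hp hx.1)]
  · intro r hr
    by_cases hc : (p.1 : ℕ) = 0 ∧ (r.1 : ℕ) ≠ 0
    · rw [if_pos hc, hR r q hc.2, if_neg hr, mul_zero]
    · rw [if_neg hc]

lemma Zw_mul_Gw (hk : 0 < k)
    (Xm Ym : Matrix (Fin k × Fin n) (Fin k × Fin n) ℂ)
    (L : Matrix (Fin k × Fin n) (Fin k × Fin n) (Polynomial ℂ))
    (hLe : ∀ p q, L p q = C (Xm p q) * X + C (Ym p q))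
    (cY0 : ∀ (p : Fin k × Fin n) (b : Fin n), (p.1 : ℕ) ≠ 0 → Ym p (⟨0, hk⟩, b) = 0)
    (cXtop : ∀ (p : Fin k × Fin n) (b : Fin n), (p.1 : ℕ) ≠ 0 →
      Xm p (⟨k - 1, Nat.sub_lt hk Nat.one_pos⟩, b) = 0)
    (cmid : ∀ (p : Fin k × Fin n) (b : Fin n) (j : Fin k), (p.1 : ℕ) ≠ 0 → (j : ℕ) ≠ 0 →
      Xm p (⟨(j : ℕ) - 1, lt_of_le_of_lt (Nat.sub_le _ _) j.isLt⟩, b) = - Ym p (j, b)) :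
    (Zw k n Xm).map C * Gw k n L = L := by
  refine Matrix.ext fun p q => ?_
  obtain ⟨q1, q2⟩ := q
  rw [Matrix.mul_apply]
  by_cases hp : (p.1 : ℕ) = 0
  · rw [sum_one _ p]
    · rw [Matrix.map_apply, Zw_apply, if_pos (Or.inl hp), if_pos rfl, Gw_apply, if_pos hp,
        Polynomial.C_1, one_mul]
    · intro r hr
      rw [Matrix.map_apply, Zw_apply, if_pos (Or.inl hp), if_neg (fun e => hr e.symm),
        map_zero, zero_mul]
  · rw [hLe p (q1, q2)]
    -- zero-term helper for rows `r` that are neither candidate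
    have hzero : ∀ r : Fin k × Fin n,
        (¬((q1 : ℕ) + 1 = (r.1 : ℕ) ∧ r.2 = q2)) → ((r.1 : ℕ) ≠ 0 → ¬(r = (q1, q2))) →
        (Zw k n Xm).map C p r * Gw k n L r (q1, q2) = 0 := by
      intro r hr1 hr2
      by_cases hr0 : (r.1 : ℕ) = 0
      · rw [Matrix.map_apply, Zw_apply, if_pos (Or.inr hr0),
          if_neg (fun e => hp (by rw [e]; exact hr0)), map_zero, zero_mul]
      · have hg : Gw k n L r (q1, q2) = 0 := by
          rw [Gw_apply, if_neg hr0]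
          by_cases hs : r.2 = q2
          · rw [if_pos hs, gent_apply,
              if_neg (fun e => hr1 ⟨e, hs⟩),
              if_neg (fun e => (hr2 hr0) (by
                have hrr : r = (r.1, r.2) := rfl
                rw [hrr, ← e, hs])),
              add_zero]
          · rw [if_neg hs]
        rw [hg, mul_zero]
    by_cases hq0 : (q1 : ℕ) = 0
    · have h1k : (q1 : ℕ) + 1 < k := by
        have := p.1.isLt; omega
      rw [sum_one _ ((⟨(q1 : ℕ) + 1, h1k⟩ : Fin k), q2)]
      · have hZ : Zw k n Xm p ((⟨(q1 : ℕ) + 1, h1k⟩ : Fin k), q2) = Xm p (q1, q2) := by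
          rw [Zw_apply, if_neg (by push_neg; exact ⟨hp, Nat.succ_ne_zero _⟩)]
          rfl
        have hG : Gw k n L ((⟨(q1 : ℕ) + 1, h1k⟩ : Fin k), q2) (q1, q2) = X := by
          rw [Gw_apply, if_neg (Nat.succ_ne_zero _), if_pos rfl, gent_apply,
            if_pos rfl, if_neg (fin_ne (by simp)), add_zero]
        have hY : Ym p (q1, q2) = 0 := by
          rw [pair_eq (Fin.ext (show (q1:ℕ) = ((⟨0, hk⟩ : Fin k) : ℕ) from hq0)) rfl]
          exact cY0 p q2 hp
        rw [Matrix.map_apply, hZ, hG, hY, map_zero, add_zero]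
      · intro r hr
        refine hzero r (fun hx => hr ?_) (fun h0 hx => h0 (by rw [hx]; exact hq0))
        have hrr : r = (r.1, r.2) := rfl
        rw [hrr]
        exact pair_eq (Fin.ext hx.1.symm) hx.2
    · by_cases hqt : (q1 : ℕ) + 1 < k
      · rw [sum_two _ ((⟨(q1 : ℕ) + 1, hqt⟩ : Fin k), q2) (q1, q2)
          (by
            intro e
            have he := congrArg (fun x : Fin k × Fin n => (x.1 : ℕ)) e
            simp at he)]
        · have hZ1 : Zw k n Xm p ((⟨(q1 : ℕ) + 1, hqt⟩ : Fin k), q2) = Xm p (q1, q2) := by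
            rw [Zw_apply, if_neg (by push_neg; exact ⟨hp, Nat.succ_ne_zero _⟩)]
            rfl
          have hG1 : Gw k n L ((⟨(q1 : ℕ) + 1, hqt⟩ : Fin k), q2) (q1, q2) = X := by
            rw [Gw_apply, if_neg (Nat.succ_ne_zero _), if_pos rfl, gent_apply,
              if_pos rfl, if_neg (fin_ne (by simp)), add_zero]
          have hZ2 : Zw k n Xm p (q1, q2)
              = Xm p (⟨(q1 : ℕ) - 1, lt_of_le_of_lt (Nat.sub_le _ _) q1.isLt⟩, q2) := by
            rw [Zw_apply, if_neg (by push_neg; exact ⟨hp, hq0⟩)]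
          have hG2 : Gw k n L (q1, q2) (q1, q2) = -1 := by
            rw [Gw_apply, if_neg hq0, if_pos rfl, gent_apply,
              if_neg (by omega), if_pos rfl, zero_add]
          rw [Matrix.map_apply, Matrix.map_apply, hZ1, hG1, hZ2, hG2,
            cmid p q2 q1 hp hq0, map_neg]
          ring
        · intro r hr1 hr2
          refine hzero r (fun hx => hr1 ?_) (fun _ hx => hr2 hx)
          have hrr : r = (r.1, r.2) := rfl
          rw [hrr]
          exact pair_eq (Fin.ext hx.1.symm) hx.2
      · have hqtop : (q1 : ℕ) = k - 1 := by have := q1.isLt; omega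
        rw [sum_one _ (q1, q2)]
        · have hZ2 : Zw k n Xm p (q1, q2)
              = Xm p (⟨(q1 : ℕ) - 1, lt_of_le_of_lt (Nat.sub_le _ _) q1.isLt⟩, q2) := by
            rw [Zw_apply, if_neg (by push_neg; exact ⟨hp, hq0⟩)]
          have hG2 : Gw k n L (q1, q2) (q1, q2) = -1 := by
            rw [Gw_apply, if_neg hq0, if_pos rfl, gent_apply,
              if_neg (by omega), if_pos rfl, zero_add]
          have hXq : Xm p (q1, q2) = 0 := by
            rw [pair_eq (Fin.ext (show (q1:ℕ) = ((⟨k - 1, Nat.sub_lt hk Nat.one_pos⟩ : Fin k) : ℕ) from hqtop)) rfl]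
            exact cXtop p q2 hp
          rw [Matrix.map_apply, hZ2, hG2, cmid p q2 q1 hp hq0, hXq, map_neg, map_zero]
          ring
        · intro r hr
          refine hzero r (fun hx => ?_) (fun _ hx => hr hx)
          have h1 := r.1.isLt
          have h2 := hx.1
          omega

end Mats

section Inner

variable {k n : ℕ}

lemma sum_ite_val (f : Fin k → ℂ) (m : ℕ) :
    (∑ j : Fin k, if m = (j : ℕ) then f j else 0)
      = if h : m < k then f ⟨m, h⟩ else 0 := by
  split_ifs with h
  · rw [sum_one _ ⟨m, h⟩]
    · rw [if_pos (show m = ((⟨m, h⟩ : Fin k) : ℕ) from rfl)]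
    · intro j hj
      rw [if_neg (fun e => hj (Fin.ext e.symm))]
  · refine Finset.sum_eq_zero fun j _ => ?_
    rw [if_neg (fun e => h (by rw [e]; exact j.isLt))]

lemma sum_ite_val' (f : Fin k → ℂ) (m : ℕ) :
    (∑ j : Fin k, if m = (j : ℕ) + 1 then f j else 0)
      = if h : m - 1 < k ∧ 1 ≤ m then f ⟨m - 1, h.1⟩ else 0 := by
  split_ifs with h
  · rw [sum_one _ ⟨m - 1, h.1⟩]
    · rw [if_pos (show m = (m - 1) + 1 by omega)]
    · intro j hj
      rw [if_neg (fun e => hj (Fin.ext (show (j : ℕ) = m - 1 by omega)))]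
  · refine Finset.sum_eq_zero fun j _ => ?_
    rw [if_neg (fun e => h (by have := j.isLt; omega))]

lemma inner_lin (hk : 0 < k) (hn : 0 < n)
    (Xm Ym : Matrix (Fin k × Fin n) (Fin k × Fin n) ℂ)
    (L : Matrix (Fin k × Fin n) (Fin k × Fin n) (Polynomial ℂ))
    (hLe : ∀ p q, L p q = C (Xm p q) * X + C (Ym p q))
    (P : Matrix (Fin n) (Fin n) (Polynomial ℂ))
    (hans : L * lamM k n = Matrix.of fun p b => if (p.1 : ℕ) = 0 then P p.2 b else 0)
    (hdet : L.det ≠ 0) : IsLinearization L P := by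
  have hrow : ∀ (p : Fin k × Fin n) (b : Fin n), (p.1 : ℕ) ≠ 0 →
      ∑ j : Fin k, (C (Xm p (j, b)) * X + C (Ym p (j, b))) * X ^ (j : ℕ) = 0 := by
    intro p b hp
    have h : (L * lamM k n) p b = if (p.1 : ℕ) = 0 then P p.2 b else 0 := by
      rw [hans]; rfl
    rw [if_neg hp, Matrix.mul_apply, Fintype.sum_prod_type] at h
    rw [← h]
    refine Finset.sum_congr rfl fun j _ => ?_
    rw [sum_one _ b]
    · rw [show lamM k n (j, b) b = if b = b then X ^ ((j : ℕ)) else 0 from rfl, if_pos rfl,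
        hLe]
    · intro c hc
      rw [show lamM k n (j, c) b = if c = b then X ^ ((j : ℕ)) else 0 from rfl, if_neg hc,
        mul_zero]
  have hcon : ∀ (p : Fin k × Fin n) (b : Fin n), (p.1 : ℕ) ≠ 0 → ∀ m : ℕ,
      (if h : m - 1 < k ∧ 1 ≤ m then Xm p (⟨m - 1, h.1⟩, b) else 0)
        + (if h : m < k then Ym p (⟨m, h⟩, b) else 0) = 0 := by
    intro p b hp m
    have h := row_coeff (fun j => Xm p (j, b)) (fun j => Ym p (j, b)) (hrow p b hp) m
    rw [sum_ite_val', sum_ite_val] at h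
    exact h
  have cY0 : ∀ (p : Fin k × Fin n) (b : Fin n), (p.1 : ℕ) ≠ 0 → Ym p (⟨0, hk⟩, b) = 0 := by
    intro p b hp
    have h0 := hcon p b hp 0
    rw [dif_neg (by omega), dif_pos hk, zero_add] at h0
    exact h0
  have cXtop : ∀ (p : Fin k × Fin n) (b : Fin n), (p.1 : ℕ) ≠ 0 →
      Xm p (⟨k - 1, Nat.sub_lt hk Nat.one_pos⟩, b) = 0 := by
    intro p b hp
    have h0 := hcon p b hp k
    rw [dif_pos (show k - 1 < k ∧ 1 ≤ k from ⟨Nat.sub_lt hk Nat.one_pos, hk⟩),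
      dif_neg (lt_irrefl k), add_zero] at h0
    exact h0
  have cmid : ∀ (p : Fin k × Fin n) (b : Fin n) (j : Fin k), (p.1 : ℕ) ≠ 0 → (j : ℕ) ≠ 0 →
      Xm p (⟨(j : ℕ) - 1, lt_of_le_of_lt (Nat.sub_le _ _) j.isLt⟩, b) = - Ym p (j, b) := by
    intro p b j hp hj
    have h0 := hcon p b hp (j : ℕ)
    rw [dif_pos (show (j : ℕ) - 1 < k ∧ 1 ≤ (j : ℕ) from
        ⟨lt_of_le_of_lt (Nat.sub_le _ _) j.isLt, by omega⟩),
      dif_pos j.isLt] at h0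
    have hj' : (⟨(j : ℕ), j.isLt⟩ : Fin k) = j := Fin.ext rfl
    rw [hj'] at h0
    exact eq_neg_of_add_eq_zero_left h0
  have hfact : (Zw k n Xm).map C * Gw k n L = L := Zw_mul_Gw hk Xm Ym L hLe cY0 cXtop cmid
  have hmapdet : ((Zw k n Xm).map C).det = C ((Zw k n Xm).det) := by
    rw [← RingHom.mapMatrix_apply, ← RingHom.map_det]
  have hZdet : (Zw k n Xm).det ≠ 0 := by
    intro h0
    apply hdet
    rw [← hfact, Matrix.det_mul, hmapdet, h0, map_zero, zero_mul]
  have hZunit : IsUnit (Zw k n Xm).det := isUnit_iff_ne_zero.mpr hZdet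
  have hZinv : (Zw k n Xm)⁻¹ * Zw k n Xm = 1 := Matrix.nonsing_inv_mul _ hZunit
  have hZinv' : Zw k n Xm * (Zw k n Xm)⁻¹ = 1 := Matrix.mul_nonsing_inv _ hZunit
  set R := Gw k n L * Fm k n with hR
  have hRdelta : ∀ p q, (p.1 : ℕ) ≠ 0 → R p q = if p = q then 1 else 0 :=
    fun p q hp => Gw_mul_Fm_delta L p q hp
  have hRP : ∀ p q, (p.1 : ℕ) = 0 → (q.1 : ℕ) = 0 → R p q = P p.2 q.2 :=
    fun p q hp hq => Gw_mul_Fm_P L P hans p q hp hq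
  refine ⟨E2 k n R * ((Zw k n Xm)⁻¹).map C, Fm k n, ?_, ?_, ?_⟩
  · rw [Matrix.det_mul]
    refine IsUnit.mul ?_ ?_
    · exact IsUnit.of_mul_eq_one _
        (by rw [← Matrix.det_mul, E2_mul_E2' R, Matrix.det_one])
    · rw [← RingHom.mapMatrix_apply, ← RingHom.map_det]
      refine Polynomial.isUnit_C.mpr (isUnit_iff_ne_zero.mpr ?_)
      intro h0
      have := congrArg Matrix.det hZinv
      rw [Matrix.det_mul, h0, zero_mul, Matrix.det_one] at this
      exact zero_ne_one this
  · exact IsUnit.of_mul_eq_one _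
      (by rw [← Matrix.det_mul, Fm_mul_Fiv, Matrix.det_one])
  · have hmaps : ((Zw k n Xm)⁻¹).map C * ((Zw k n Xm).map C * Gw k n L) = Gw k n L := by
      rw [← Matrix.mul_assoc, ← Matrix.map_mul (f := (C : ℂ →+* Polynomial ℂ)), hZinv,
        Matrix.map_one _ (map_zero C) (map_one C), Matrix.one_mul]
    calc E2 k n R * ((Zw k n Xm)⁻¹).map C * L * Fm k n
        = E2 k n R * (((Zw k n Xm)⁻¹).map C * ((Zw k n Xm).map C * Gw k n L)) * Fm k n := by
          rw [hfact, Matrix.mul_assoc (E2 k n R)]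
      _ = E2 k n R * (Gw k n L * Fm k n) := by rw [hmaps, Matrix.mul_assoc]
      _ = diagPI P := E2_mul_diag R P hRdelta hRP

/-- transfer of linearization along a left multiplication by an invertible matrix -/
lemma transfer_left (U Uinv L : Matrix (Fin k × Fin n) (Fin k × Fin n) (Polynomial ℂ))
    (hU : U * Uinv = 1) (P : Matrix (Fin n) (Fin n) (Polynomial ℂ))
    (h : IsLinearization (U * L) P) : IsLinearization L P := by
  obtain ⟨E, F, hE, hF, heq⟩ := h
  exact ⟨E * U, F, by
    rw [Matrix.det_mul]
    exact hE.mul (IsUnit.of_mul_eq_one _ (by rw [← Matrix.det_mul, hU, Matrix.det_one])),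
    hF, by rw [Matrix.mul_assoc E U L, heq]⟩

/-- transfer of linearization along a right multiplication by an invertible matrix -/
lemma transfer_right (U Uinv L : Matrix (Fin k × Fin n) (Fin k × Fin n) (Polynomial ℂ))
    (hU : Uinv * U = 1) (P : Matrix (Fin n) (Fin n) (Polynomial ℂ))
    (h : IsLinearization (L * U) P) : IsLinearization L P := by
  obtain ⟨E, F, hE, hF, heq⟩ := h
  exact ⟨E, U * F, hE, by
    rw [Matrix.det_mul]
    exact (IsUnit.of_mul_eq_one _
      (by rw [mul_comm, ← Matrix.det_mul, hU, Matrix.det_one])).mul hF,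
    by rw [← heq]; rw [Matrix.mul_assoc, Matrix.mul_assoc, Matrix.mul_assoc]⟩

/-- transform of the ansatz under constant block (Kronecker-type) row operations -/
lemma ansatz_transform (M : Matrix (Fin k) (Fin k) ℂ)
    (L : Matrix (Fin k × Fin n) (Fin k × Fin n) (Polynomial ℂ))
    (P : Matrix (Fin n) (Fin n) (Polynomial ℂ)) (w : Fin k → ℂ)
    (hans : L * lamM k n = Matrix.of fun p b => C (w p.1) * P p.2 b) :
    ((Matrix.kroneckerMap (· * ·) M (1 : Matrix (Fin n) (Fin n) ℂ)).map C * L) * lamM k n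
      = Matrix.of fun p b => C ((M *ᵥ w) p.1) * P p.2 b := by
  rw [Matrix.mul_assoc, hans]
  refine Matrix.ext fun p b => ?_
  rw [Matrix.mul_apply, Fintype.sum_prod_type]
  have hinner : ∀ r1 : Fin k,
      (∑ r2 : Fin n,
        ((Matrix.kroneckerMap (· * ·) M (1 : Matrix (Fin n) (Fin n) ℂ)).map C) p (r1, r2) *
          (Matrix.of fun p b => C (w p.1) * P p.2 b) (r1, r2) b)
        = C (M p.1 r1 * w r1) * P p.2 b := by
    intro r1
    rw [sum_one _ p.2]
    · rw [show ((Matrix.kroneckerMap (· * ·) M (1 : Matrix (Fin n) (Fin n) ℂ)).map C)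
            p (r1, p.2) = C (M p.1 r1 * (1 : Matrix (Fin n) (Fin n) ℂ) p.2 p.2) from rfl,
        Matrix.one_apply_eq, mul_one,
        show (Matrix.of fun (p : Fin k × Fin n) b => C (w p.1) * P p.2 b) (r1, p.2) b
          = C (w r1) * P p.2 b from rfl]
      rw [← mul_assoc, ← Polynomial.C_mul]
    · intro r2 hr2
      rw [show ((Matrix.kroneckerMap (· * ·) M (1 : Matrix (Fin n) (Fin n) ℂ)).map C)
            p (r1, r2) = C (M p.1 r1 * (1 : Matrix (Fin n) (Fin n) ℂ) p.2 r2) from rfl,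
        Matrix.one_apply_ne (fun e => hr2 e.symm), mul_zero, map_zero, zero_mul]
  rw [Finset.sum_congr rfl fun r1 _ => hinner r1]
  rw [show (Matrix.of fun (p : Fin k × Fin n) b => C ((M *ᵥ w) p.1) * P p.2 b) p b
      = C ((M *ᵥ w) p.1) * P p.2 b from rfl]
  rw [show (M *ᵥ w) p.1 = ∑ r1, M p.1 r1 * w r1 from rfl]
  rw [map_sum, Finset.sum_mul]

end Inner

/-- Main lemma, monomial version: a regular pencil in the ansatz space `𝓛₁` (monomial
basis) is a linearization. -/
lemma mono_main {k n : ℕ} (hk : 0 < k) (hn : 0 < n)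
    (Xm Ym : Matrix (Fin k × Fin n) (Fin k × Fin n) ℂ)
    (L : Matrix (Fin k × Fin n) (Fin k × Fin n) (Polynomial ℂ))
    (hL : L = Matrix.of fun p q => C (Xm p q) * X + C (Ym p q))
    (P : Matrix (Fin n) (Fin n) (Polynomial ℂ)) (w : Fin k → ℂ)
    (hans : L * lamM k n = Matrix.of fun p b => C (w p.1) * P p.2 b)
    (hdet : L.det ≠ 0) : IsLinearization L P := by
  classical
  -- the ansatz vector is nonzero since `L` is regular
  have hw : w ≠ 0 := by
    intro hw0
    apply hdet
    rw [← Matrix.exists_mulVec_eq_zero_iff]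
    refine ⟨fun q => lamM k n q ⟨0, hn⟩, ?_, ?_⟩
    · intro h0
      have h1 := congrFun h0 ((⟨0, hk⟩ : Fin k), (⟨0, hn⟩ : Fin n))
      rw [show lamM k n ((⟨0, hk⟩ : Fin k), (⟨0, hn⟩ : Fin n)) ⟨0, hn⟩
          = if ((⟨0, hn⟩ : Fin n)) = ⟨0, hn⟩ then X ^ (((⟨0, hk⟩ : Fin k)) : ℕ) else 0
          from rfl, if_pos rfl] at h1
      simp at h1
    · funext p
      rw [show (L *ᵥ fun q => lamM k n q ⟨0, hn⟩) p = (L * lamM k n) p ⟨0, hn⟩ from rfl,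
        hans, Pi.zero_apply]
      rw [show (Matrix.of fun (p : Fin k × Fin n) b => C (w p.1) * P p.2 b) p ⟨0, hn⟩
        = C (w p.1) * P p.2 ⟨0, hn⟩ from rfl, hw0]
      rw [show (0 : Fin k → ℂ) p.1 = 0 from rfl, map_zero, zero_mul]
  obtain ⟨i0, hi0⟩ : ∃ i, w i ≠ 0 := by
    by_contra hno
    push_neg at hno
    exact hw (funext fun i => hno i)
  set σ := Equiv.swap (⟨0, hk⟩ : Fin k) i0 with hσ
  set w' : Fin k → ℂ := fun i => w (σ i) with hw'
  have hw'0 : w' ⟨0, hk⟩ ≠ 0 := by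
    rw [hw']
    simp only [hσ, Equiv.swap_apply_left]
    exact hi0
  -- the permutation matrix S and the elimination matrix D
  set S : Matrix (Fin k) (Fin k) ℂ := Matrix.of fun i j => if σ i = j then 1 else 0 with hS
  set D : Matrix (Fin k) (Fin k) ℂ := Matrix.of fun i j =>
    if (i : ℕ) = 0 then (if (j : ℕ) = 0 then (w' ⟨0, hk⟩)⁻¹ else 0)
    else if i = j then 1 else if (j : ℕ) = 0 then -(w' i) * (w' ⟨0, hk⟩)⁻¹ else 0 with hD
  set Dv : Matrix (Fin k) (Fin k) ℂ := Matrix.of fun i j =>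
    if (i : ℕ) = 0 then (if (j : ℕ) = 0 then w' ⟨0, hk⟩ else 0)
    else if i = j then 1 else if (j : ℕ) = 0 then w' i else 0 with hDv
  have hSapp : ∀ a b : Fin k, S a b = if σ a = b then 1 else 0 := fun a b => by rw [hS]; rfl
  have hDapp : ∀ a b : Fin k, D a b =
      if (a : ℕ) = 0 then (if (b : ℕ) = 0 then (w' ⟨0, hk⟩)⁻¹ else 0)
      else if a = b then 1 else if (b : ℕ) = 0 then -(w' a) * (w' ⟨0, hk⟩)⁻¹ else 0 :=
    fun a b => by rw [hD]; rfl
  have hDvapp : ∀ a b : Fin k, Dv a b =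
      if (a : ℕ) = 0 then (if (b : ℕ) = 0 then w' ⟨0, hk⟩ else 0)
      else if a = b then 1 else if (b : ℕ) = 0 then w' a else 0 :=
    fun a b => by rw [hDv]; rfl
  have hSS : S * S = 1 := by
    refine Matrix.ext fun i j => ?_
    rw [Matrix.mul_apply, sum_one _ (σ i)]
    · rw [hSapp, if_pos rfl, one_mul, hSapp, Equiv.swap_apply_self, Matrix.one_apply]
    · intro r hr
      rw [hSapp, if_neg (fun e => hr e.symm), zero_mul]
  have hDDv : D * Dv = 1 := by
    refine Matrix.ext fun i j => ?_
    rw [Matrix.mul_apply]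
    by_cases hi : (i : ℕ) = 0
    · rw [sum_one _ (⟨0, hk⟩ : Fin k)]
      · rw [hDapp, if_pos hi, if_pos rfl, hDvapp, if_pos rfl]
        by_cases hj : (j : ℕ) = 0
        · have hij : i = j := Fin.ext (by rw [hi, hj])
          rw [if_pos hj, inv_mul_cancel₀ hw'0, hij, Matrix.one_apply_eq]
        · rw [if_neg hj, mul_zero,
            Matrix.one_apply_ne (fun e => hj (by rw [← e]; exact hi))]
      · intro r hr
        rw [hDapp, if_pos hi, if_neg (fun e => hr (Fin.ext e)), zero_mul]
    · have hij0 : i ≠ (⟨0, hk⟩ : Fin k) := fun e => hi (by rw [e])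
      rw [sum_two _ i (⟨0, hk⟩ : Fin k) hij0]
      · rw [hDapp, if_neg hi, if_pos rfl, one_mul,
          hDapp, if_neg hi, if_neg hij0, if_pos rfl,
          hDvapp, if_neg hi, hDvapp, if_pos rfl]
        by_cases hj : (j : ℕ) = 0
        · rw [if_neg (fun e : i = j => hi (by rw [e]; exact hj)), if_pos hj, if_pos hj,
            Matrix.one_apply_ne (fun e : i = j => hi (by rw [e]; exact hj)),
            mul_assoc, inv_mul_cancel₀ hw'0, mul_one]
          ring
        · rw [if_neg hj, if_neg hj, mul_zero, add_zero, Matrix.one_apply]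
      · intro r hr1 hr2
        rw [hDapp, if_neg hi, if_neg (fun e => hr1 e.symm),
          if_neg (fun e => hr2 (Fin.ext e)), zero_mul]
  have hSw : S *ᵥ w = w' := by
    funext i
    rw [show (S *ᵥ w) i = ∑ j, S i j * w j from rfl, sum_one _ (σ i)]
    · rw [hSapp, if_pos rfl, one_mul, hw']
    · intro r hr
      rw [hSapp, if_neg (fun e => hr e.symm), zero_mul]
  have hDw : D *ᵥ w' = (fun i : Fin k => if (i : ℕ) = 0 then 1 else 0) := by
    funext i
    rw [show (D *ᵥ w') i = ∑ j, D i j * w' j from rfl]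
    by_cases hi : (i : ℕ) = 0
    · rw [sum_one _ (⟨0, hk⟩ : Fin k)]
      · rw [hDapp, if_pos hi, if_pos rfl, inv_mul_cancel₀ hw'0, if_pos hi]
      · intro r hr
        rw [hDapp, if_pos hi, if_neg (fun e => hr (Fin.ext e)), zero_mul]
    · rw [sum_two _ i (⟨0, hk⟩ : Fin k) (fun e => hi (by rw [e]))]
      · rw [hDapp, if_neg hi, if_pos rfl, one_mul,
          hDapp, if_neg hi, if_neg (fun e => hi (by rw [e])), if_pos rfl,
          mul_assoc, inv_mul_cancel₀ hw'0, mul_one, if_neg hi]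
        ring
      · intro r hr1 hr2
        rw [hDapp, if_neg hi, if_neg (fun e => hr1 e.symm),
          if_neg (fun e => hr2 (Fin.ext e)), zero_mul]
  have hMw : (D * S) *ᵥ w = (fun i : Fin k => if (i : ℕ) = 0 then 1 else 0) := by
    rw [← Matrix.mulVec_mulVec, hSw, hDw]
  -- lift to size kn
  set Mk := Matrix.kroneckerMap (· * ·) (D * S) (1 : Matrix (Fin n) (Fin n) ℂ) with hMk
  set Mkv := Matrix.kroneckerMap (· * ·) (S * Dv) (1 : Matrix (Fin n) (Fin n) ℂ) with hMkv
  have hMM : Mk * Mkv = 1 := by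
    rw [hMk, hMkv, ← Matrix.mul_kronecker_mul,
      Matrix.one_mul (1 : Matrix (Fin n) (Fin n) ℂ),
      Matrix.mul_assoc D S (S * Dv), ← Matrix.mul_assoc S S Dv, hSS, Matrix.one_mul, hDDv,
      Matrix.one_kronecker_one]
  have hMkdet : Mk.det ≠ 0 := by
    intro h0
    have hcontr := congrArg Matrix.det hMM
    rw [Matrix.det_mul, h0, zero_mul, Matrix.det_one] at hcontr
    exact zero_ne_one hcontr
  set Lt := Mk.map C * L with hLt
  have hLt' : Lt = Matrix.of fun p q => C ((Mk * Xm) p q) * X + C ((Mk * Ym) p q) := by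
    rw [hLt, hL]
    exact const_mul_pencil Mk Xm Ym
  have hdet' : Lt.det ≠ 0 := by
    rw [hLt, Matrix.det_mul]
    refine mul_ne_zero ?_ hdet
    rw [← RingHom.mapMatrix_apply, ← RingHom.map_det]
    intro h0
    exact hMkdet (by rwa [Polynomial.C_eq_zero] at h0)
  have hansT : Lt * lamM k n
      = Matrix.of fun p b => if (p.1 : ℕ) = 0 then P p.2 b else 0 := by
    have h1 := ansatz_transform (D * S) L P w hans
    rw [hMw] at h1
    rw [hLt, hMk, h1]
    refine Matrix.ext fun p b => ?_
    rw [show (Matrix.of fun (p : Fin k × Fin n) b =>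
        C ((fun i : Fin k => if (i : ℕ) = 0 then (1 : ℂ) else 0) p.1) * P p.2 b) p b
        = C (if (p.1 : ℕ) = 0 then (1 : ℂ) else 0) * P p.2 b from rfl]
    rw [show (Matrix.of fun (p : Fin k × Fin n) b =>
        if (p.1 : ℕ) = 0 then P p.2 b else 0) p b
        = if (p.1 : ℕ) = 0 then P p.2 b else 0 from rfl]
    by_cases hp : (p.1 : ℕ) = 0
    · rw [if_pos hp, if_pos hp, Polynomial.C_1, one_mul]
    · rw [if_neg hp, if_neg hp, map_zero, zero_mul]
  have hlin : IsLinearization Lt P :=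
    inner_lin hk hn (Mk * Xm) (Mk * Ym) Lt (fun p q => by rw [hLt']; rfl) P hansT hdet'
  refine transfer_left (Mk.map C) (Mkv.map C) L ?_ P (by rwa [← hLt])
  rw [← Matrix.map_mul (f := (C : ℂ →+* Polynomial ℂ)), hMM,
    Matrix.map_one _ (map_zero C) (map_one C)]

section Glue

variable {k n : ℕ}

/-- the reversed-monomial tensor `Λ'(λ) ⊗ Iₙ` -/
noncomputable def lamM' (k n : ℕ) : Matrix (Fin k × Fin n) (Fin n) (Polynomial ℂ) :=
  Matrix.of fun p b => if p.2 = b then Polynomial.X ^ (k - ((p.1 : ℕ) + 1)) else 0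

lemma mul_lam_entry (L : Matrix (Fin k × Fin n) (Fin k × Fin n) (Polynomial ℂ))
    (p : Fin k × Fin n) (b : Fin n) :
    (L * lamM k n) p b = ∑ j : Fin k, L p (j, b) * X ^ (j : ℕ) := by
  rw [Matrix.mul_apply, Fintype.sum_prod_type]
  refine Finset.sum_congr rfl fun j _ => ?_
  rw [sum_one _ b]
  · rw [show lamM k n (j, b) b = if b = b then X ^ ((j : ℕ)) else 0 from rfl, if_pos rfl]
  · intro c hc
    rw [show lamM k n (j, c) b = if c = b then X ^ ((j : ℕ)) else 0 from rfl, if_neg hc,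
      mul_zero]

lemma mul_lam'_entry (L : Matrix (Fin k × Fin n) (Fin k × Fin n) (Polynomial ℂ))
    (p : Fin k × Fin n) (b : Fin n) :
    (L * lamM' k n) p b = ∑ j : Fin k, L p (j, b) * X ^ (k - ((j : ℕ) + 1)) := by
  rw [Matrix.mul_apply, Fintype.sum_prod_type]
  refine Finset.sum_congr rfl fun j _ => ?_
  rw [sum_one _ b]
  · rw [show lamM' k n (j, b) b = if b = b then X ^ (k - ((j : ℕ) + 1)) else 0 from rfl,
      if_pos rfl]
  · intro c hc
    rw [show lamM' k n (j, c) b = if c = b then X ^ (k - ((j : ℕ) + 1)) else 0 from rfl,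
      if_neg hc, mul_zero]

lemma reflect_pencil_term (a b : ℂ) (j k : ℕ) (hj : j < k) :
    Polynomial.reflect k ((C a * X + C b) * X ^ j)
      = (C b * X + C a) * X ^ (k - (j + 1)) := by
  have h1 : (C a * X + C b) * X ^ j = C a * X ^ (j + 1) + C b * X ^ j := by ring
  rw [h1, Polynomial.reflect_add, Polynomial.reflect_C_mul_X_pow,
    Polynomial.reflect_C_mul_X_pow, Polynomial.revAt_le (by omega),
    Polynomial.revAt_le (by omega)]
  have h2 : k - j = (k - (j + 1)) + 1 := by omega
  rw [h2, pow_succ']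
  ring

/-- a pencil in `𝓛₁` w.r.t. increasing monomials yields the reversed pencil in `𝓛₁`
w.r.t. decreasing monomials, with `rev P` on the right. -/
lemma rev_ansatz (X1 Y1 : Matrix (Fin k × Fin n) (Fin k × Fin n) ℂ)
    (L1 L2 : Matrix (Fin k × Fin n) (Fin k × Fin n) (Polynomial ℂ))
    (hL1 : L1 = Matrix.of fun p q => C (X1 p q) * X + C (Y1 p q))
    (hL2 : L2 = Matrix.of fun p q => C (Y1 p q) * X + C (X1 p q))
    (P revP : Matrix (Fin n) (Fin n) (Polynomial ℂ))
    (hrevP : revP = Matrix.of fun a b => (P a b).reflect k)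
    (w : Fin k → ℂ)
    (hans1 : L1 * lamM k n = Matrix.of fun p b => C (w p.1) * P p.2 b) :
    L2 * lamM' k n = Matrix.of fun p b => C (w p.1) * revP p.2 b := by
  refine Matrix.ext fun p b => ?_
  rw [mul_lam'_entry]
  have e3 : (L1 * lamM k n) p b = C (w p.1) * P p.2 b := by rw [hans1]; rfl
  rw [mul_lam_entry] at e3
  calc ∑ j : Fin k, L2 p (j, b) * X ^ (k - ((j : ℕ) + 1))
      = ∑ j : Fin k, Polynomial.reflect k (L1 p (j, b) * X ^ (j : ℕ)) := by
        refine Finset.sum_congr rfl fun j _ => ?_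
        rw [show L1 p (j, b) = C (X1 p (j, b)) * X + C (Y1 p (j, b)) from by rw [hL1]; rfl,
          show L2 p (j, b) = C (Y1 p (j, b)) * X + C (X1 p (j, b)) from by rw [hL2]; rfl,
          reflect_pencil_term _ _ _ _ j.isLt]
    _ = Polynomial.reflect k (∑ j : Fin k, L1 p (j, b) * X ^ (j : ℕ)) :=
        (reflect_sum _ _ _).symm
    _ = Polynomial.reflect k (C (w p.1) * P p.2 b) := by rw [e3]
    _ = C (w p.1) * Polynomial.reflect k (P p.2 b) := Polynomial.reflect_C_mul _ _ _
    _ = (Matrix.of fun (p : Fin k × Fin n) b => C (w p.1) * revP p.2 b) p b := by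
        rw [hrevP]; rfl

/-- The flip (order-reversing) permutation matrix on block indices. -/
noncomputable def flipM (k n : ℕ) : Matrix (Fin k × Fin n) (Fin k × Fin n) ℂ :=
  Matrix.kroneckerMap (· * ·) (Matrix.of fun i j : Fin k => if j = i.rev then 1 else 0)
    (1 : Matrix (Fin n) (Fin n) ℂ)

lemma flip_invol (k n : ℕ) : flipM k n * flipM k n = 1 := by
  rw [flipM, ← Matrix.mul_kronecker_mul, Matrix.one_mul (1 : Matrix (Fin n) (Fin n) ℂ)]
  have h : (Matrix.of fun i j : Fin k => if j = i.rev then (1 : ℂ) else 0) *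
      (Matrix.of fun i j : Fin k => if j = i.rev then (1 : ℂ) else 0) = 1 := by
    refine Matrix.ext fun i j => ?_
    rw [Matrix.mul_apply, sum_one _ i.rev]
    · rw [show (Matrix.of fun i j : Fin k => if j = i.rev then (1 : ℂ) else 0) i i.rev
          = if i.rev = i.rev then (1 : ℂ) else 0 from rfl, if_pos rfl, one_mul,
        show (Matrix.of fun i j : Fin k => if j = i.rev then (1 : ℂ) else 0) i.rev j
          = if j = i.rev.rev then (1 : ℂ) else 0 from rfl, Fin.rev_rev,
        Matrix.one_apply]
      by_cases hij : i = j
      · rw [if_pos hij.symm, if_pos hij]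
      · rw [if_neg (fun e => hij e.symm), if_neg hij]
    · intro r hr
      rw [show (Matrix.of fun i j : Fin k => if j = i.rev then (1 : ℂ) else 0) i r
          = if r = i.rev then (1 : ℂ) else 0 from rfl, if_neg hr, zero_mul]
  rw [h, Matrix.one_kronecker_one]

lemma flip_lam (k n : ℕ) : (flipM k n).map C * lamM k n = lamM' k n := by
  refine Matrix.ext fun p b => ?_
  rw [Matrix.mul_apply, sum_one _ (p.1.rev, p.2)]
  · rw [show ((flipM k n).map C) p (p.1.rev, p.2)
        = C ((if p.1.rev = p.1.rev then (1 : ℂ) else 0) *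
            (1 : Matrix (Fin n) (Fin n) ℂ) p.2 p.2) from rfl,
      if_pos rfl, Matrix.one_apply_eq, mul_one, Polynomial.C_1, one_mul,
      show lamM k n (p.1.rev, p.2) b = if p.2 = b then X ^ ((p.1.rev : ℕ)) else 0 from rfl,
      show lamM' k n p b = if p.2 = b then X ^ (k - ((p.1 : ℕ) + 1)) else 0 from rfl,
      Fin.val_rev]
  · intro r hr
    obtain ⟨r1, r2⟩ := r
    by_cases h1 : r1 = p.1.rev
    · have h2 : r2 ≠ p.2 := fun e => hr (by rw [h1, e])
      rw [show ((flipM k n).map C) p (r1, r2)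
          = C ((if r1 = p.1.rev then (1 : ℂ) else 0) *
              (1 : Matrix (Fin n) (Fin n) ℂ) p.2 r2) from rfl,
        Matrix.one_apply_ne (fun e => h2 e.symm), mul_zero, map_zero, zero_mul]
    · rw [show ((flipM k n).map C) p (r1, r2)
          = C ((if r1 = p.1.rev then (1 : ℂ) else 0) *
              (1 : Matrix (Fin n) (Fin n) ℂ) p.2 r2) from rfl,
        if_neg h1, zero_mul, map_zero, zero_mul]

lemma det_diagPI (hk : 0 < k) (P : Matrix (Fin n) (Fin n) (Polynomial ℂ)) :
    (diagPI (k := k) P).det = P.det := by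
  have heq : diagPI (k := k) P
      = (Matrix.blockDiagonal fun i : Fin k => if (i : ℕ) = 0 then P else 1).reindex
          (Equiv.prodComm (Fin n) (Fin k)) (Equiv.prodComm (Fin n) (Fin k)) := by
    refine Matrix.ext fun p q => ?_
    rw [show ((Matrix.blockDiagonal fun i : Fin k => if (i : ℕ) = 0 then P else 1).reindex
          (Equiv.prodComm (Fin n) (Fin k)) (Equiv.prodComm (Fin n) (Fin k))) p q
        = (Matrix.blockDiagonal fun i : Fin k => if (i : ℕ) = 0 then P else 1)
            (p.2, p.1) (q.2, q.1) from rfl,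
      Matrix.blockDiagonal_apply,
      show diagPI (k := k) P p q = if (p.1 : ℕ) = 0 ∧ (q.1 : ℕ) = 0 then P p.2 q.2
        else if p = q then 1 else 0 from rfl]
    by_cases h1 : p.1 = q.1
    · rw [if_pos h1]
      by_cases h0 : (p.1 : ℕ) = 0
      · rw [if_pos ⟨h0, by rw [← h1]; exact h0⟩, if_pos h0]
      · rw [if_neg (fun hx : _ ∧ _ => h0 hx.1), if_neg h0, Matrix.one_apply]
        by_cases h2 : p.2 = q.2
        · rw [if_pos h2, if_pos (Prod.ext h1 h2)]
        · rw [if_neg h2, if_neg (fun e => h2 (congrArg Prod.snd e))]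
    · rw [if_neg h1,
        if_neg (fun hx : (p.1 : ℕ) = 0 ∧ (q.1 : ℕ) = 0 =>
          h1 (Fin.ext (by rw [hx.1, hx.2]))),
        if_neg (fun e => h1 (congrArg Prod.fst e))]
  rw [heq, Matrix.det_reindex_self, Matrix.det_blockDiagonal]
  have hsp : ∀ i : Fin k, (if (i : ℕ) = 0 then P else 1).det
      = if (i : ℕ) = 0 then P.det else 1 := by
    intro i
    by_cases h0 : (i : ℕ) = 0
    · rw [if_pos h0, if_pos h0]
    · rw [if_neg h0, if_neg h0, Matrix.det_one]
  rw [Finset.prod_congr rfl fun i _ => hsp i]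
  rw [Finset.prod_eq_single (⟨0, hk⟩ : Fin k)]
  · rw [if_pos rfl]
  · intro i _ hi
    rw [if_neg (fun e => hi (Fin.ext e))]
  · intro h
    exact absurd (Finset.mem_univ _) h

end Glue

end StrongLin

/-- **Linearization, strong linearization and regularity are equivalent in the ansatz
space `𝓛₁`.**  Let `P(λ) = Σ_{j=0}^k A_j φ_j(λ)` be a regular matrix polynomial of
degree `k` in a basis `{φ_0, …, φ_k}` with `φ_0, …, φ_{k-1}` linearly independent of
degree ≤ `k-1` and `c ≠ 0` the leading coefficient of `φ_{k-1}`, and let the pencil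
`L(λ) = λX + Y` satisfy the ansatz `L(λ)·(Φ(λ)⊗Iₙ) = c·v ⊗ P(λ)`.  Then TFAE:
`L` is a linearization of `P`; `L` is a strong linearization of `P` (i.e. additionally
`rev L = λY + X` is a linearization of `rev P(λ) = λ^k P(1/λ)`); `L` is regular. -/
theorem stmt0 (n k : ℕ) (hn : 0 < n) (hk : 0 < k)
    (φ : Fin (k + 1) → Polynomial ℂ)
    (hφdeg : ∀ j : Fin k, (φ j.castSucc).natDegree ≤ k - 1)
    (hφind : LinearIndependent ℂ fun j : Fin k => φ j.castSucc)
    (hφk : (φ (Fin.last k)).natDegree = k)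
    (c : ℂ) (hc : c ≠ 0)
    (hck : (φ (⟨k - 1, by omega⟩ : Fin (k + 1))).coeff (k - 1) = c)
    (A : Fin (k + 1) → Matrix (Fin n) (Fin n) ℂ)
    (hAk : A (Fin.last k) ≠ 0)
    (P : Matrix (Fin n) (Fin n) (Polynomial ℂ))
    (hP : P = Matrix.of fun a b => ∑ j : Fin (k + 1), Polynomial.C (A j a b) * φ j)
    (hreg : P.det ≠ 0)
    (Xm Ym : Matrix (Fin k × Fin n) (Fin k × Fin n) ℂ)
    (L : Matrix (Fin k × Fin n) (Fin k × Fin n) (Polynomial ℂ))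
    (hL : L = Matrix.of fun p q =>
      Polynomial.C (Xm p q) * Polynomial.X + Polynomial.C (Ym p q))
    (Φmat : Matrix (Fin k × Fin n) (Fin n) (Polynomial ℂ))
    (hΦ : Φmat = Matrix.of fun p b => if p.2 = b then φ p.1.castSucc else 0)
    (v : Fin k → ℂ)
    (hansatz : L * Φmat = Matrix.of fun p b => Polynomial.C (c * v p.1) * P p.2 b)
    (revL : Matrix (Fin k × Fin n) (Fin k × Fin n) (Polynomial ℂ))
    (hrevL : revL = Matrix.of fun p q =>
      Polynomial.C (Ym p q) * Polynomial.X + Polynomial.C (Xm p q))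
    (revP : Matrix (Fin n) (Fin n) (Polynomial ℂ))
    (hrevP : revP = Matrix.of fun a b => (P a b).reflect k) :
    [IsLinearization L P,
      IsLinearization L P ∧ IsLinearization revL revP,
      L.det ≠ 0].TFAE := by
  classical
  -- coefficient matrix of the polynomial basis w.r.t. the monomials
  set B : Matrix (Fin k) (Fin k) ℂ := Matrix.of fun j i => (φ j.castSucc).coeff (i : ℕ)
    with hB
  have hBapp : ∀ j i : Fin k, B j i = (φ j.castSucc).coeff (i : ℕ) := fun j i => by
    rw [hB]; rfl
  set Bk := Matrix.kroneckerMap (· * ·) B (1 : Matrix (Fin n) (Fin n) ℂ) with hBk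
  have hBΛ : Bk.map Polynomial.C * StrongLin.lamM k n = Φmat := by
    refine Matrix.ext fun p b => ?_
    rw [Matrix.mul_apply, Fintype.sum_prod_type]
    have hin : ∀ i : Fin k,
        (∑ c : Fin n, (Bk.map Polynomial.C) p (i, c) * StrongLin.lamM k n (i, c) b)
          = if p.2 = b then Polynomial.C (B p.1 i) * Polynomial.X ^ (i : ℕ) else 0 := by
      intro i
      rw [StrongLin.sum_one _ p.2]
      · rw [show (Bk.map Polynomial.C) p (i, p.2)
            = Polynomial.C (B p.1 i * (1 : Matrix (Fin n) (Fin n) ℂ) p.2 p.2) from rfl,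
          Matrix.one_apply_eq, mul_one,
          show StrongLin.lamM k n (i, p.2) b
            = if p.2 = b then Polynomial.X ^ (i : ℕ) else 0 from rfl]
        by_cases hpb : p.2 = b
        · rw [if_pos hpb, if_pos hpb]
        · rw [if_neg hpb, if_neg hpb, mul_zero]
      · intro c hc
        rw [show (Bk.map Polynomial.C) p (i, c)
            = Polynomial.C (B p.1 i * (1 : Matrix (Fin n) (Fin n) ℂ) p.2 c) from rfl,
          Matrix.one_apply_ne (fun e => hc e.symm), mul_zero, map_zero, zero_mul]
    rw [Finset.sum_congr rfl fun i _ => hin i, hΦ,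
      show (Matrix.of fun (p : Fin k × Fin n) b =>
        if p.2 = b then φ p.1.castSucc else 0) p b
        = if p.2 = b then φ p.1.castSucc else 0 from rfl]
    by_cases hpb : p.2 = b
    · simp only [if_pos hpb]
      have hdeg : (φ p.1.castSucc).natDegree < k := lt_of_le_of_lt (hφdeg p.1) (by omega)
      rw [Finset.sum_congr rfl fun i (_ : i ∈ Finset.univ) => by rw [hBapp]]
      rw [Fin.sum_univ_eq_sum_range
        (fun i => Polynomial.C ((φ p.1.castSucc).coeff i) * Polynomial.X ^ i) k]
      conv_rhs => rw [Polynomial.as_sum_range' _ k hdeg]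
      exact Finset.sum_congr rfl fun i _ => Polynomial.C_mul_X_pow_eq_monomial
    · rw [if_neg hpb]
      exact Finset.sum_eq_zero fun i _ => if_neg hpb
  have hBdet : B.det ≠ 0 := by
    intro h0
    obtain ⟨u, hu0, huB⟩ := Matrix.exists_vecMul_eq_zero_iff.mpr h0
    have hsum : ∑ j : Fin k, u j • φ j.castSucc = 0 := by
      ext m
      rw [Polynomial.finset_sum_coeff, Polynomial.coeff_zero]
      simp only [Polynomial.coeff_smul, smul_eq_mul]
      by_cases hm : m < k
      · have hcol := congrFun huB ⟨m, hm⟩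
        rw [show (u ᵥ* B) ⟨m, hm⟩ = ∑ j, u j * B j ⟨m, hm⟩ from rfl, Pi.zero_apply] at hcol
        rw [← hcol]
        exact Finset.sum_congr rfl fun j _ => by rw [hBapp]
      · exact Finset.sum_eq_zero fun j _ => by
          rw [Polynomial.coeff_eq_zero_of_natDegree_lt
            (lt_of_le_of_lt (hφdeg j) (by omega)), mul_zero]
    have hz := Fintype.linearIndependent_iff.mp hφind u hsum
    exact hu0 (funext fun i => hz i)
  have hBkdet : Bk.det ≠ 0 := by
    rw [hBk, Matrix.det_kronecker, Matrix.det_one, one_pow, mul_one, Fintype.card_fin]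
    exact pow_ne_zero _ hBdet
  have hBinv : B⁻¹ * B = 1 := Matrix.nonsing_inv_mul _ (isUnit_iff_ne_zero.mpr hBdet)
  set Bkv := Matrix.kroneckerMap (· * ·) B⁻¹ (1 : Matrix (Fin n) (Fin n) ℂ) with hBkv
  have hBvB : Bkv * Bk = 1 := by
    rw [hBkv, hBk, ← Matrix.mul_kronecker_mul,
      Matrix.one_mul (1 : Matrix (Fin n) (Fin n) ℂ), hBinv, Matrix.one_kronecker_one]
  have hBkCinv : (Bkv.map Polynomial.C) * (Bk.map Polynomial.C) = 1 := by
    rw [← Matrix.map_mul (f := (Polynomial.C : ℂ →+* Polynomial ℂ)), hBvB,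
      Matrix.map_one _ (map_zero Polynomial.C) (map_one Polynomial.C)]
  have hBkCdet : (Bk.map Polynomial.C).det ≠ 0 := by
    rw [← RingHom.mapMatrix_apply, ← RingHom.map_det]
    exact fun h0 => hBkdet (by rwa [Polynomial.C_eq_zero] at h0)
  have hL1 : L * Bk.map Polynomial.C = Matrix.of fun p q =>
      Polynomial.C ((Xm * Bk) p q) * Polynomial.X + Polynomial.C ((Ym * Bk) p q) := by
    rw [hL]; exact StrongLin.pencil_mul_const Xm Ym Bk
  have hans1 : (L * Bk.map Polynomial.C) * StrongLin.lamM k n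
      = Matrix.of fun p b => Polynomial.C (c * v p.1) * P p.2 b := by
    rw [Matrix.mul_assoc, hBΛ, hansatz]
  have h3L : L.det ≠ 0 → IsLinearization L P := by
    intro hdet
    refine StrongLin.transfer_right (Bk.map Polynomial.C) (Bkv.map Polynomial.C) L
      hBkCinv P ?_
    refine StrongLin.mono_main hk hn (Xm * Bk) (Ym * Bk) _ hL1 P (fun i => c * v i)
      hans1 ?_
    rw [Matrix.det_mul]
    exact mul_ne_zero hdet hBkCdet
  have h3R : L.det ≠ 0 → IsLinearization revL revP := by
    intro hdet
    have hrevdet : revL.det ≠ 0 := by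
      rw [hrevL, StrongLin.det_rev_pencil Xm Ym, ← hL]
      exact fun h0 => hdet (StrongLin.reflect_injective h0)
    have hL2 : revL * Bk.map Polynomial.C = Matrix.of fun p q =>
        Polynomial.C ((Ym * Bk) p q) * Polynomial.X + Polynomial.C ((Xm * Bk) p q) := by
      rw [hrevL]; exact StrongLin.pencil_mul_const Ym Xm Bk
    have hans2 : (revL * Bk.map Polynomial.C) * StrongLin.lamM' k n
        = Matrix.of fun p b => Polynomial.C (c * v p.1) * revP p.2 b :=
      StrongLin.rev_ansatz (Xm * Bk) (Ym * Bk) _ _ hL1 hL2 P revP hrevP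
        (fun i => c * v i) hans1
    have hans3 : ((revL * Bk.map Polynomial.C) * (StrongLin.flipM k n).map Polynomial.C) *
        StrongLin.lamM k n
          = Matrix.of fun p b => Polynomial.C (c * v p.1) * revP p.2 b := by
      rw [Matrix.mul_assoc, StrongLin.flip_lam, hans2]
    have hL3 : (revL * Bk.map Polynomial.C) * (StrongLin.flipM k n).map Polynomial.C
        = Matrix.of fun p q =>
          Polynomial.C ((Ym * Bk * StrongLin.flipM k n) p q) * Polynomial.X
            + Polynomial.C ((Xm * Bk * StrongLin.flipM k n) p q) := by
      rw [hL2]; exact StrongLin.pencil_mul_const _ _ _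
    have hflipC : ((StrongLin.flipM k n).map Polynomial.C) *
        ((StrongLin.flipM k n).map Polynomial.C) = 1 := by
      rw [← Matrix.map_mul (f := (Polynomial.C : ℂ →+* Polynomial ℂ)),
        StrongLin.flip_invol, Matrix.map_one _ (map_zero Polynomial.C) (map_one Polynomial.C)]
    have hflipdet : ((StrongLin.flipM k n).map Polynomial.C).det ≠ 0 := by
      intro h0
      have hcontr := congrArg Matrix.det hflipC
      rw [Matrix.det_mul, h0, zero_mul, Matrix.det_one] at hcontr
      exact zero_ne_one hcontr
    have hdet3 : ((revL * Bk.map Polynomial.C) *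
        (StrongLin.flipM k n).map Polynomial.C).det ≠ 0 := by
      rw [Matrix.det_mul, Matrix.det_mul]
      exact mul_ne_zero (mul_ne_zero hrevdet hBkCdet) hflipdet
    have hlin3 := StrongLin.mono_main hk hn _ _ _ hL3 revP (fun i => c * v i) hans3 hdet3
    have step1 : IsLinearization (revL * Bk.map Polynomial.C) revP :=
      StrongLin.transfer_right ((StrongLin.flipM k n).map Polynomial.C)
        ((StrongLin.flipM k n).map Polynomial.C) _ hflipC revP hlin3
    exact StrongLin.transfer_right (Bk.map Polynomial.C) (Bkv.map Polynomial.C) revL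
      hBkCinv revP step1
  have h13 : IsLinearization L P → L.det ≠ 0 := by
    rintro ⟨E, F, hE, hF, heq⟩ h0
    apply hreg
    have hdet := congrArg Matrix.det heq
    rw [Matrix.det_mul, Matrix.det_mul, h0, mul_zero, zero_mul,
      StrongLin.det_diagPI hk P] at hdet
    exact hdet.symm
  tfae_have 1 → 3 := h13
  tfae_have 3 → 2 := fun h => ⟨h3L h, h3R h⟩
  tfae_have 2 → 1 := fun h => h.1
  tfae_finish
end

section
/- Let P_1(λ) and P_2(λ) be n×n complex Laurent matrix polynomials, let λ_0 ∈ ℂ, λ_0 ≠ 0, and let A(λ), B(λ) be n×n matrix-valued functions analytic on an open neighborhood Ω of λ_0 such that P_2(λ) = A(λ)P_1(λ)B(λ) on Ω and both A(λ_0) and B(λ_0) are invertible. Then λ_0 is an eigenvalue of P_1 (det P_1(λ_0) = 0) if and only if it is an eigenvalue of P_2, and a sequence {y_i}_{i=0}^{ℓ} is a Jordan chain of length ℓ+1 for P_2 at λ_0 if and only if the sequence {z_i}_{i=0}^{ℓ} with z_i = Σ_{j=0}^{i} B^{(j)}(λ_0)/j! · y_{i−j} is a Jordan chain of length ℓ+1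 for P_1 at λ_0. -/
open Matrix

/-- The `j`-th (entrywise) derivative of a matrix-valued function of a complex variable. -/
noncomputable def matIterDeriv {n : ℕ} (F : ℂ → Matrix (Fin n) (Fin n) ℂ) (j : ℕ) (z : ℂ) :
    Matrix (Fin n) (Fin n) ℂ :=
  Matrix.of fun a b => iteratedDeriv j (fun w => F w a b) z

/-- `x 0, …, x l` is a Jordan chain of length `l + 1` for the (matrix-valued, analytic)
function `F` at `lam`: `x 0 ≠ 0` and `Σ_{i=0}^m F^{(m-i)}(lam)/(m-i)! · x i = 0` for
all `m = 0, …, l`. -/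
def IsJordanChain {n : ℕ} (F : ℂ → Matrix (Fin n) (Fin n) ℂ) (lam : ℂ)
    (x : ℕ → Fin n → ℂ) (l : ℕ) : Prop :=
  x 0 ≠ 0 ∧ ∀ m, m ≤ l →
    ∑ i ∈ Finset.range (m + 1),
      (((m - i).factorial : ℂ))⁻¹ • (matIterDeriv F (m - i) lam).mulVec (x i) = 0

open Topology Filter

lemma analyticAt_deriv' {f : ℂ → ℂ} {z : ℂ} (hf : AnalyticAt ℂ f z) :
    AnalyticAt ℂ (deriv f) z := by
  obtain ⟨t, ht, hto, hzt⟩ := eventually_nhds_iff.mp hf.eventually_analyticAt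
  exact (AnalyticOnNhd.deriv (fun y hy => ht y hy)) z hzt

lemma analyticAt_iteratedDeriv' {f : ℂ → ℂ} {z : ℂ} (hf : AnalyticAt ℂ f z) (m : ℕ) :
    AnalyticAt ℂ (iteratedDeriv m f) z := by
  induction m with
  | zero => rwa [iteratedDeriv_zero]
  | succ m ih => rw [iteratedDeriv_succ]; exact analyticAt_deriv' ih

lemma iteratedDeriv_add_at {f g : ℂ → ℂ} (m : ℕ) :
    ∀ {z : ℂ}, AnalyticAt ℂ f z → AnalyticAt ℂ g z →
    iteratedDeriv m (fun w => f w + g w) z = iteratedDeriv m f z + iteratedDeriv m g z := by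
  induction m with
  | zero => intro z _ _; simp
  | succ m ih =>
    intro z hf hg
    have key : (iteratedDeriv m fun w => f w + g w) =ᶠ[𝓝 z]
        fun w => iteratedDeriv m f w + iteratedDeriv m g w := by
      filter_upwards [hf.eventually_analyticAt, hg.eventually_analyticAt] with w h1 h2
        using ih h1 h2
    rw [iteratedDeriv_succ, key.deriv_eq, iteratedDeriv_succ, iteratedDeriv_succ,
      deriv_fun_add (analyticAt_iteratedDeriv' hf m).differentiableAt
        (analyticAt_iteratedDeriv' hg m).differentiableAt]

lemma iteratedDeriv_zero_fun (m : ℕ) (z : ℂ) : iteratedDeriv m (fun _ : ℂ => (0:ℂ)) z = 0 := by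
  induction m generalizing z with
  | zero => simp
  | succ m ih =>
    rw [iteratedDeriv_succ']
    simpa [deriv_const'] using ih z

lemma iteratedDeriv_sum_at {ι : Type*} (s : Finset ι) (F : ι → ℂ → ℂ) (m : ℕ) {z : ℂ}
    (h : ∀ i ∈ s, AnalyticAt ℂ (F i) z) :
    iteratedDeriv m (fun w => ∑ i ∈ s, F i w) z = ∑ i ∈ s, iteratedDeriv m (F i) z := by
  induction s using Finset.cons_induction with
  | empty => simpa using iteratedDeriv_zero_fun m z
  | cons a s ha ih =>
    simp only [Finset.mem_cons, forall_eq_or_imp] at h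
    simp only [Finset.sum_cons]
    rw [iteratedDeriv_add_at m h.1 (Finset.analyticAt_fun_sum s h.2), ih h.2]


lemma pascal_sum (a b : ℕ → ℂ) (m : ℕ) :
    ∑ i ∈ Finset.range (m + 1), (m.choose i : ℂ) *
        (a (i + 1) * b (m - i) + a i * b (m + 1 - i))
      = ∑ i ∈ Finset.range (m + 2), ((m + 1).choose i : ℂ) * (a i * b (m + 1 - i)) := by
  have key : ∑ i ∈ Finset.range (m + 1), (m.choose i : ℂ) * (a i * b (m + 1 - i))
      = ∑ i ∈ Finset.range (m + 1), (m.choose (i + 1) : ℂ) * (a (i + 1) * b (m - i))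
        + a 0 * b (m + 1) := by
    rw [Finset.sum_range_succ' (fun i => (m.choose i : ℂ) * (a i * b (m + 1 - i))) m]
    rw [Finset.sum_range_succ (fun i => (m.choose (i + 1) : ℂ) * (a (i + 1) * b (m - i))) m]
    simp [Nat.choose_succ_self]
  simp only [mul_add, Finset.sum_add_distrib]
  rw [key, Finset.sum_range_succ' (fun i => ((m + 1).choose i : ℂ) * (a i * b (m + 1 - i))) (m + 1)]
  simp only [Nat.succ_sub_succ, Nat.choose_succ_succ m, Nat.cast_add, add_mul,
    Finset.sum_add_distrib, Nat.choose_zero_right, Nat.cast_one, one_mul, Nat.sub_zero]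
  ring

lemma iteratedDeriv_mul_at (m : ℕ) :
    ∀ {z : ℂ} {f g : ℂ → ℂ}, AnalyticAt ℂ f z → AnalyticAt ℂ g z →
    iteratedDeriv m (fun w => f w * g w) z
      = ∑ i ∈ Finset.range (m + 1),
          (m.choose i : ℂ) * (iteratedDeriv i f z * iteratedDeriv (m - i) g z) := by
  induction m with
  | zero => intro z f g _ _; simp
  | succ m ih =>
    intro z f g hf hg
    have key : (iteratedDeriv m fun w => f w * g w) =ᶠ[𝓝 z]
        fun w => ∑ i ∈ Finset.range (m + 1),
          (m.choose i : ℂ) * (iteratedDeriv i f w * iteratedDeriv (m - i) g w) := by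
      filter_upwards [hf.eventually_analyticAt, hg.eventually_analyticAt] with w h1 h2
        using ih h1 h2
    rw [iteratedDeriv_succ, key.deriv_eq]
    have hdf : ∀ i : ℕ, DifferentiableAt ℂ (iteratedDeriv i f) z :=
      fun i => (analyticAt_iteratedDeriv' hf i).differentiableAt
    have hdg : ∀ i : ℕ, DifferentiableAt ℂ (iteratedDeriv i g) z :=
      fun i => (analyticAt_iteratedDeriv' hg i).differentiableAt
    rw [deriv_fun_sum (fun i _ => (((hdf i).fun_mul (hdg (m - i))).const_mul _))]
    have step : ∀ i ∈ Finset.range (m + 1),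
        deriv (fun w => (m.choose i : ℂ) *
            (iteratedDeriv i f w * iteratedDeriv (m - i) g w)) z
          = (m.choose i : ℂ) * (iteratedDeriv (i + 1) f z * iteratedDeriv (m - i) g z
              + iteratedDeriv i f z * iteratedDeriv (m + 1 - i) g z) := by
      intro i hi
      have hle : i ≤ m := Nat.lt_succ_iff.mp (Finset.mem_range.mp hi)
      rw [deriv_const_mul _ ((hdf i).fun_mul (hdg (m - i))),
        deriv_fun_mul (hdf i) (hdg (m - i)), ← iteratedDeriv_succ, ← iteratedDeriv_succ]
      have : m - i + 1 = m + 1 - i := by omega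
      rw [this]
    rw [Finset.sum_congr rfl step]
    exact pascal_sum (fun i => iteratedDeriv i f z) (fun i => iteratedDeriv i g z) m

/-- Taylor coefficient matrices. -/
noncomputable def tc {n : ℕ} (F : ℂ → Matrix (Fin n) (Fin n) ℂ) (lam : ℂ) (m : ℕ) :
    Matrix (Fin n) (Fin n) ℂ :=
  ((m.factorial : ℂ))⁻¹ • matIterDeriv F m lam

/-- Convolution of a sequence of matrices against a sequence of vectors. -/
noncomputable def cvv {n : ℕ} (M : ℕ → Matrix (Fin n) (Fin n) ℂ) (x : ℕ → Fin n → ℂ)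
    (m : ℕ) : Fin n → ℂ :=
  ∑ i ∈ Finset.range (m + 1), (M i).mulVec (x (m - i))

lemma tc_zero {n : ℕ} (F : ℂ → Matrix (Fin n) (Fin n) ℂ) (lam : ℂ) :
    tc F lam 0 = F lam := by
  ext a b
  simp [tc, matIterDeriv]

lemma tc_mul {n : ℕ} (F G : ℂ → Matrix (Fin n) (Fin n) ℂ) (lam : ℂ)
    (hF : ∀ a b, AnalyticAt ℂ (fun w => F w a b) lam)
    (hG : ∀ a b, AnalyticAt ℂ (fun w => G w a b) lam) (m : ℕ) :
    tc (fun w => F w * G w) lam m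
      = ∑ i ∈ Finset.range (m + 1), tc F lam i * tc G lam (m - i) := by
  ext a b
  have h1 : (fun w => (F w * G w) a b) = fun w => ∑ c, F w a c * G w c b := by
    funext w; exact Matrix.mul_apply
  have h2 : iteratedDeriv m (fun w => ∑ c, F w a c * G w c b) lam
      = ∑ c, ∑ i ∈ Finset.range (m + 1),
          (m.choose i : ℂ) * (iteratedDeriv i (fun w => F w a c) lam
            * iteratedDeriv (m - i) (fun w => G w c b) lam) := by
    rw [iteratedDeriv_sum_at Finset.univ _ m (fun c _ => (hF a c).fun_mul (hG c b))]
    exact Finset.sum_congr rfl fun c _ => iteratedDeriv_mul_at m (hF a c) (hG c b)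
  simp only [tc, matIterDeriv, Matrix.smul_apply, Matrix.of_apply, Matrix.sum_apply,
    Matrix.mul_apply, smul_eq_mul]
  rw [h2]
  simp only [Finset.mul_sum]
  rw [Finset.sum_comm]
  refine Finset.sum_congr rfl fun i hi => ?_
  have hle : i ≤ m := Nat.lt_succ_iff.mp (Finset.mem_range.mp hi)
  refine Finset.sum_congr rfl fun c _ => ?_
  have hfac : ((m.factorial : ℂ))⁻¹ * (m.choose i : ℂ)
      = ((i.factorial : ℂ))⁻¹ * (((m - i).factorial : ℂ))⁻¹ := by
    have h := Nat.choose_mul_factorial_mul_factorial hle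
    have h' : (m.choose i : ℂ) * (i.factorial : ℂ) * ((m - i).factorial : ℂ)
        = (m.factorial : ℂ) := by exact_mod_cast congrArg Nat.cast h
    have hi0 : (i.factorial : ℂ) ≠ 0 := Nat.cast_ne_zero.mpr (Nat.factorial_ne_zero i)
    have hmi0 : ((m - i).factorial : ℂ) ≠ 0 := Nat.cast_ne_zero.mpr (Nat.factorial_ne_zero _)
    have hm0 : (m.factorial : ℂ) ≠ 0 := Nat.cast_ne_zero.mpr (Nat.factorial_ne_zero m)
    field_simp
    linear_combination h'
  calc ((m.factorial : ℂ))⁻¹ * ((m.choose i : ℂ) * (iteratedDeriv i (fun w => F w a c) lam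
          * iteratedDeriv (m - i) (fun w => G w c b) lam))
      = (((m.factorial : ℂ))⁻¹ * (m.choose i : ℂ)) * (iteratedDeriv i (fun w => F w a c) lam
          * iteratedDeriv (m - i) (fun w => G w c b) lam) := by ring
    _ = _ := by rw [hfac]; ring

lemma sum_mulVec' {n : ℕ} (s : Finset ℕ) (f : ℕ → Matrix (Fin n) (Fin n) ℂ)
    (v : Fin n → ℂ) : (∑ i ∈ s, f i) *ᵥ v = ∑ i ∈ s, f i *ᵥ v := by
  induction s using Finset.cons_induction with
  | empty => simp [Matrix.zero_mulVec]
  | cons a s ha ih => rw [Finset.sum_cons, Finset.sum_cons, Matrix.add_mulVec, ih]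

lemma mulVec_sum' {n : ℕ} (s : Finset ℕ) (M : Matrix (Fin n) (Fin n) ℂ)
    (v : ℕ → Fin n → ℂ) : M *ᵥ (∑ i ∈ s, v i) = ∑ i ∈ s, M *ᵥ v i := by
  induction s using Finset.cons_induction with
  | empty => simp [Matrix.mulVec_zero]
  | cons a s ha ih => rw [Finset.sum_cons, Finset.sum_cons, Matrix.mulVec_add, ih]

lemma cvv_assoc {n : ℕ} (M N : ℕ → Matrix (Fin n) (Fin n) ℂ) (x : ℕ → Fin n → ℂ) (m : ℕ) :
    cvv (fun q => ∑ i ∈ Finset.range (q + 1), M i * N (q - i)) x m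
      = cvv M (fun q => cvv N x q) m := by
  unfold cvv
  simp only [sum_mulVec', mulVec_sum']
  rw [Finset.sum_sigma', Finset.sum_sigma']
  refine Finset.sum_nbij' (fun p => ⟨p.2, p.1 - p.2⟩) (fun p => ⟨p.1 + p.2, p.1⟩)
    ?_ ?_ ?_ ?_ ?_
  · rintro ⟨i, p⟩ hm
    simp only [Finset.mem_sigma, Finset.mem_range] at hm ⊢
    omega
  · rintro ⟨p, j⟩ hm
    simp only [Finset.mem_sigma, Finset.mem_range] at hm ⊢
    omega
  · rintro ⟨i, p⟩ hm
    simp only [Finset.mem_sigma, Finset.mem_range] at hm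
    simp only [Sigma.mk.inj_iff, heq_eq_eq, and_true, true_and]
    omega
  · rintro ⟨p, j⟩ hm
    simp only [Finset.mem_sigma, Finset.mem_range] at hm
    simp only [Sigma.mk.inj_iff, heq_eq_eq, and_true, true_and]
    omega
  · rintro ⟨i, p⟩ hm
    simp only [Finset.mem_sigma, Finset.mem_range] at hm
    have h1 : m - p - (i - p) = m - i := by omega
    rw [Matrix.mulVec_mulVec, h1]

lemma sum_eq_cvv {n : ℕ} (F : ℂ → Matrix (Fin n) (Fin n) ℂ) (lam : ℂ) (x : ℕ → Fin n → ℂ)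
    (m : ℕ) :
    ∑ i ∈ Finset.range (m + 1),
        (((m - i).factorial : ℂ))⁻¹ • (matIterDeriv F (m - i) lam).mulVec (x i)
      = cvv (tc F lam) x m := by
  unfold cvv
  rw [← Finset.sum_range_reflect (fun i => (tc F lam i).mulVec (x (m - i))) (m + 1)]
  refine Finset.sum_congr rfl fun i hi => ?_
  have hle : i ≤ m := Nat.lt_succ_iff.mp (Finset.mem_range.mp hi)
  have h1 : m + 1 - 1 - i = m - i := by omega
  have h2 : m - (m - i) = i := by omega
  rw [h1, h2, tc, Matrix.smul_mulVec]

lemma analyticAt_zpow' (j : ℤ) {z : ℂ} (hz : z ≠ 0) :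
    AnalyticAt ℂ (fun w : ℂ => w ^ j) z := by
  obtain ⟨m, rfl | rfl⟩ := j.eq_nat_or_neg
  · have : (fun w : ℂ => w ^ (m : ℤ)) = fun w => w ^ m := by
      funext w; exact zpow_natCast w m
    rw [this]
    exact (analyticAt_id.pow m)
  · have : (fun w : ℂ => w ^ (-(m : ℤ))) = fun w => (w ^ m)⁻¹ := by
      funext w; rw [_root_.zpow_neg, zpow_natCast]
    rw [this]
    exact (analyticAt_id.pow m).inv (pow_ne_zero m hz)

lemma tc_congr {n : ℕ} {F G : ℂ → Matrix (Fin n) (Fin n) ℂ} {lam : ℂ}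
    (h : F =ᶠ[𝓝 lam] G) (m : ℕ) : tc F lam m = tc G lam m := by
  unfold tc matIterDeriv
  congr 1
  ext a b
  refine Filter.EventuallyEq.iteratedDeriv_eq m ?_
  filter_upwards [h] with w hw using by rw [hw]

lemma cvv_zero_iff {n : ℕ} (M : ℕ → Matrix (Fin n) (Fin n) ℂ) (u : ℕ → Fin n → ℂ)
    (hM : IsUnit (M 0)) (l : ℕ) :
    (∀ m, m ≤ l → cvv M u m = 0) ↔ (∀ m, m ≤ l → u m = 0) := by
  have hinj : Function.Injective (M 0).mulVec := Matrix.mulVec_injective_iff_isUnit.mpr hM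
  constructor
  · intro h m
    induction m using Nat.strong_induction_on with
    | _ m ih =>
      intro hm
      have h0 := h m hm
      unfold cvv at h0
      rw [Finset.sum_range_succ'] at h0
      have hz : ∀ i ∈ Finset.range m, (M (i + 1)).mulVec (u (m - (i + 1))) = 0 := by
        intro i hi
        have him : i < m := Finset.mem_range.mp hi
        rw [ih (m - (i + 1)) (by omega) (by omega), Matrix.mulVec_zero]
      rw [Finset.sum_congr rfl hz, Finset.sum_const_zero, zero_add, Nat.sub_zero] at h0
      apply hinj
      rw [h0, Matrix.mulVec_zero]
  · intro h m hm
    unfold cvv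
    refine Finset.sum_eq_zero fun i hi => ?_
    rw [h (m - i) (by omega), Matrix.mulVec_zero]

/-- **Equivalence of Jordan structures under analytic equivalence.** If
`P₂(λ) = A(λ)P₁(λ)B(λ)` on an open neighborhood `Ω` of `λ₀ ≠ 0` with `A, B` analytic on
`Ω` and `A(λ₀), B(λ₀)` invertible, then `λ₀` is an eigenvalue of `P₁` iff it is one of
`P₂`, and `{y_i}` is a Jordan chain for `P₂` at `λ₀` iff `{z_i}` with
`z_i = Σ_{j=0}^i B^{(j)}(λ₀)/j! · y_{i-j}` is a Jordan chain for `P₁` at `λ₀`. -/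
theorem stmt10 (n : ℕ) (k : ℕ)
    (A1 A2 : ℤ → Matrix (Fin n) (Fin n) ℂ)
    (P1 P2 : ℂ → Matrix (Fin n) (Fin n) ℂ)
    (hP1 : ∀ z : ℂ, z ≠ 0 → P1 z = ∑ j ∈ Finset.Icc (-(k : ℤ)) (k : ℤ), z ^ j • A1 j)
    (hP2 : ∀ z : ℂ, z ≠ 0 → P2 z = ∑ j ∈ Finset.Icc (-(k : ℤ)) (k : ℤ), z ^ j • A2 j)
    (lam : ℂ) (hlam : lam ≠ 0)
    (Ω : Set ℂ) (hΩ : IsOpen Ω) (hmem : lam ∈ Ω)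
    (Afun Bfun : ℂ → Matrix (Fin n) (Fin n) ℂ)
    (hA : ∀ z ∈ Ω, ∀ a b, AnalyticAt ℂ (fun w => Afun w a b) z)
    (hB : ∀ z ∈ Ω, ∀ a b, AnalyticAt ℂ (fun w => Bfun w a b) z)
    (hfact : ∀ z ∈ Ω, P2 z = Afun z * P1 z * Bfun z)
    (hAinv : IsUnit (Afun lam).det) (hBinv : IsUnit (Bfun lam).det) :
    ((P1 lam).det = 0 ↔ (P2 lam).det = 0) ∧
      ∀ (l : ℕ) (y : ℕ → Fin n → ℂ),
        IsJordanChain P2 lam y l ↔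
          IsJordanChain P1 lam
            (fun i => ∑ j ∈ Finset.range (i + 1),
              ((j.factorial : ℂ))⁻¹ • (matIterDeriv Bfun j lam).mulVec (y (i - j))) l := by
  have hA0 : (Afun lam).det ≠ 0 := hAinv.ne_zero
  have hB0 : (Bfun lam).det ≠ 0 := hBinv.ne_zero
  constructor
  · -- determinants
    have hdet : (P2 lam).det = (Afun lam).det * (P1 lam).det * (Bfun lam).det := by
      rw [hfact lam hmem, Matrix.det_mul, Matrix.det_mul]
    constructor
    · intro h; rw [hdet, h, mul_zero, zero_mul]
    · intro h
      rw [hdet] at h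
      rcases mul_eq_zero.mp h with h1 | h2
      · rcases mul_eq_zero.mp h1 with h3 | h4
        · exact absurd h3 hA0
        · exact h4
      · exact absurd h2 hB0
  · -- Jordan chains
    intro l y
    have hAa : ∀ a b, AnalyticAt ℂ (fun w => Afun w a b) lam := hA lam hmem
    have hBa : ∀ a b, AnalyticAt ℂ (fun w => Bfun w a b) lam := hB lam hmem
    have hP1a : ∀ a b, AnalyticAt ℂ (fun w => P1 w a b) lam := by
      intro a b
      have hg : AnalyticAt ℂ
          (fun w : ℂ => ∑ j ∈ Finset.Icc (-(k : ℤ)) (k : ℤ), w ^ j * A1 j a b) lam :=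
        Finset.analyticAt_fun_sum _ fun j _ => (analyticAt_zpow' j hlam).mul analyticAt_const
      refine hg.congr ?_
      filter_upwards [isOpen_ne.eventually_mem hlam] with w hw
      rw [hP1 w hw]
      simp [Matrix.sum_apply, Matrix.smul_apply, smul_eq_mul]
    have hQa : ∀ a b, AnalyticAt ℂ (fun w => (P1 w * Bfun w) a b) lam := by
      intro a b
      have : (fun w => (P1 w * Bfun w) a b) = fun w => ∑ c, P1 w a c * Bfun w c b := by
        funext w; exact Matrix.mul_apply
      rw [this]
      exact Finset.analyticAt_fun_sum _ fun c _ => (hP1a a c).mul (hBa c b)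
    have hP2ev : P2 =ᶠ[𝓝 lam] fun w => Afun w * (P1 w * Bfun w) := by
      filter_upwards [hΩ.eventually_mem hmem] with w hw
      rw [hfact w hw, mul_assoc]
    have hcP2 : ∀ m, tc P2 lam m = ∑ p ∈ Finset.range (m + 1),
        tc Afun lam p * tc (fun w => P1 w * Bfun w) lam (m - p) := fun m =>
      (tc_congr hP2ev m).trans (tc_mul Afun (fun w => P1 w * Bfun w) lam hAa hQa m)
    have hcQ : ∀ q, tc (fun w => P1 w * Bfun w) lam q = ∑ i ∈ Finset.range (q + 1),
        tc P1 lam i * tc Bfun lam (q - i) := tc_mul P1 Bfun lam hP1a hBa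
    set Z : ℕ → Fin n → ℂ := fun i => ∑ j ∈ Finset.range (i + 1),
      ((j.factorial : ℂ))⁻¹ • (matIterDeriv Bfun j lam).mulVec (y (i - j)) with hZdef
    have hZ : Z = fun r => cvv (tc Bfun lam) y r := by
      funext r
      refine Finset.sum_congr rfl fun j hj => ?_
      rw [tc, Matrix.smul_mulVec]
    have key : ∀ m, cvv (tc P2 lam) y m = cvv (tc Afun lam) (fun q => cvv (tc P1 lam) Z q) m := by
      intro m
      have e1 : cvv (tc P2 lam) y m = cvv (fun q => ∑ p ∈ Finset.range (q + 1),
          tc Afun lam p * tc (fun w => P1 w * Bfun w) lam (q - p)) y m := by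
        refine Finset.sum_congr rfl fun i _ => ?_
        rw [hcP2]
      have hXX : (fun q => cvv (tc (fun w => P1 w * Bfun w) lam) y q)
          = fun q => cvv (tc P1 lam) Z q := by
        funext q
        have e2 : cvv (tc (fun w => P1 w * Bfun w) lam) y q
            = cvv (fun r => ∑ i ∈ Finset.range (r + 1), tc P1 lam i * tc Bfun lam (r - i)) y q := by
          refine Finset.sum_congr rfl fun i _ => ?_
          rw [hcQ]
        rw [e2, cvv_assoc, ← hZ]
      rw [e1, cvv_assoc, hXX]
    have hAu : IsUnit (tc Afun lam 0) := by
      rw [tc_zero]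
      exact (Matrix.isUnit_iff_isUnit_det _).mpr hAinv
    have hBu : IsUnit (Bfun lam) := (Matrix.isUnit_iff_isUnit_det _).mpr hBinv
    have hBinj : Function.Injective (Bfun lam).mulVec :=
      Matrix.mulVec_injective_iff_isUnit.mpr hBu
    have hZ0 : Z 0 = (Bfun lam).mulVec (y 0) := by
      rw [hZ]
      show cvv (tc Bfun lam) y 0 = _
      unfold cvv
      rw [Finset.sum_range_one, tc_zero]
    have hne : y 0 ≠ 0 ↔ Z 0 ≠ 0 := by
      rw [hZ0]
      constructor
      · intro h hc
        exact h (hBinj (hc.trans (Matrix.mulVec_zero (Bfun lam)).symm))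
      · intro h hc
        apply h
        rw [hc, Matrix.mulVec_zero]
    simp only [IsJordanChain, ← hZdef, sum_eq_cvv]
    constructor
    · rintro ⟨h1, h2⟩
      refine ⟨hne.mp h1, ?_⟩
      have h2' : ∀ m, m ≤ l → cvv (tc Afun lam) (fun q => cvv (tc P1 lam) Z q) m = 0 := by
        intro m hm; rw [← key]; exact h2 m hm
      exact (cvv_zero_iff (tc Afun lam) _ hAu l).mp h2'
    · rintro ⟨h1, h2⟩
      refine ⟨hne.mpr h1, ?_⟩
      intro m hm
      rw [key]
      exact (cvv_zero_iff (tc Afun lam) _ hAu l).mpr h2 m hm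
end

section
/- Let d(λ), e(λ) ∈ ℂ[λ] be polynomials with d(0) ≠ 0, e(0) ≠ 0, and d dividing e, and let α, β be natural numbers with α > β. Then there exist unimodular 2×2 polynomial matrices U(λ) and V(λ) (i.e. 2×2 matrices over ℂ[λ] whose determinants are nonzero constants) such that U(λ) · diag(λ^α d(λ), λ^β e(λ)) · V(λ) = diag(λ^β d(λ), λ^α e(λ)). -/
open Matrix Polynomial

/-- **Swapping powers of `λ` between diagonal entries by unimodular transformations:**
if `d(0) ≠ 0`, `e(0) ≠ 0`, `d ∣ e` and `α > β`, then there are unimodular `2×2`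
polynomial matrices `U, V` with
`U · diag(λ^α d, λ^β e) · V = diag(λ^β d, λ^α e)`. -/
theorem stmt11 (d e : Polynomial ℂ) (hd0 : d.eval 0 ≠ 0) (he0 : e.eval 0 ≠ 0)
    (hde : d ∣ e) (α β : ℕ) (hab : β < α) :
    ∃ U V : Matrix (Fin 2) (Fin 2) (Polynomial ℂ),
      IsUnit U.det ∧ IsUnit V.det ∧
        U * Matrix.diagonal ![Polynomial.X ^ α * d, Polynomial.X ^ β * e] * V =
          Matrix.diagonal ![Polynomial.X ^ β * d, Polynomial.X ^ α * e] := by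
  obtain ⟨f, rfl⟩ := hde
  have hf0 : f.eval 0 ≠ 0 := by
    simpa [hd0] using he0
  -- IsCoprime X f
  have hXf : IsCoprime (X : Polynomial ℂ) f := by
    set c := f.eval 0 with hc
    have hdvd : (X : Polynomial ℂ) ∣ f - C c := by
      rw [Polynomial.X_dvd_iff]
      simp [hc, Polynomial.coeff_zero_eq_eval_zero]
    obtain ⟨g, hg⟩ := hdvd
    refine ⟨-(C c⁻¹ * g), C c⁻¹, ?_⟩
    have : f - X * g = C c := by rw [← hg]; ring
    have h2 : (C c⁻¹ : Polynomial ℂ) * (f - X * g) = 1 := by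
      rw [this, ← C_mul, inv_mul_cancel₀ hf0, C_1]
    linear_combination h2
  set m := α - β with hm
  have hm0 : α = β + m := by omega
  obtain ⟨p, q, hpq⟩ := ((hXf.pow_left : IsCoprime (X ^ m) f))
  refine ⟨!![p, q; -f, X ^ m], !![1, -(q * f); 1, p * X ^ m], ?_, ?_, ?_⟩
  · rw [Matrix.det_fin_two_of]
    have : p * X ^ m - q * -f = 1 := by linear_combination hpq
    rw [this]; exact isUnit_one
  · rw [Matrix.det_fin_two_of]
    have : (1 : Polynomial ℂ) * (p * X ^ m) - -(q * f) * 1 = 1 := by linear_combination hpq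
    rw [this]; exact isUnit_one
  · have hdiag : ∀ a b : Polynomial ℂ,
        Matrix.diagonal ![a, b] = !![a, 0; 0, b] := by
      intro a b
      refine Matrix.ext fun i j => ?_
      fin_cases i <;> fin_cases j <;> simp [Matrix.diagonal]
    rw [hdiag, hdiag, Matrix.mul_fin_two, Matrix.mul_fin_two]
    refine Matrix.ext fun i j => ?_
    fin_cases i <;> fin_cases j <;> simp <;> rw [hm0, pow_add]
    · linear_combination (X : Polynomial ℂ) ^ β * d * hpq
    · linear_combination (X : Polynomial ℂ) ^ β * X ^ m * d * q * hpq - (X : Polynomial ℂ) ^ β * X ^ m * d * q * hpq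
    · ring
    · linear_combination (X : Polynomial ℂ) ^ β * X ^ m * d * f * hpq
end

section
/- Let d(y) ∈ ℂ[y] be a nonzero polynomial and let m ≥ deg d be a natural number, and let p(λ) ∈ ℂ[λ] be the polynomial determined by p(λ) = λ^m d(λ + λ^{−1}) for all λ ≠ 0. Then: (i) for every λ_0 ∈ ℂ with λ_0 ∉ {0, 1, −1}, the multiplicity of λ_0 as a root of p equals the multiplicity of y_0 = λ_0 + λ_0^{−1} as a root of d; (ii) the multiplicity of λ_0 = 1 (respectively λ_0 = −1) as a root of p equals twice the multiplicity of y_0 = 2 (respectively y_0 = −2) as a root of d. -/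
open Polynomial

noncomputable def Tf (d : Polynomial ℂ) : Polynomial ℂ :=
  ∑ i ∈ Finset.range (d.natDegree + 1), C (d.coeff i) * X ^ (d.natDegree - i) * (X ^ 2 + 1) ^ i

lemma Tf_eval (d : Polynomial ℂ) (lam : ℂ) (h : lam ≠ 0) :
    (Tf d).eval lam = lam ^ d.natDegree * d.eval (lam + lam⁻¹) := by
  rw [Tf, eval_finset_sum, eval_eq_sum_range (lam + lam⁻¹), Finset.mul_sum]
  apply Finset.sum_congr rfl
  intro i hi
  have hi' : i ≤ d.natDegree := Nat.lt_succ_iff.mp (Finset.mem_range.mp hi)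
  simp only [eval_mul, eval_pow, eval_C, eval_X, eval_add, eval_one]
  have h1 : lam ^ 2 + 1 = lam * (lam + lam⁻¹) := by field_simp
  have h2 : lam ^ (d.natDegree - i) * lam ^ i = lam ^ d.natDegree := by
    rw [← pow_add]; congr 1; omega
  calc d.coeff i * lam ^ (d.natDegree - i) * (lam ^ 2 + 1) ^ i
      = (lam ^ (d.natDegree - i) * lam ^ i) * (d.coeff i * (lam + lam⁻¹) ^ i) := by
        rw [h1, mul_pow]; ring
    _ = lam ^ d.natDegree * (d.coeff i * (lam + lam⁻¹) ^ i) := by rw [h2]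

lemma Tf_ne_zero (d : Polynomial ℂ) (hd : d ≠ 0) : Tf d ≠ 0 := by
  intro h0
  apply hd
  apply Polynomial.zero_of_eval_zero
  intro y
  by_contra hy
  -- find lam ≠ 0 with lam + lam⁻¹ = y
  obtain ⟨z, hz⟩ := Complex.exists_root (f := X ^ 2 - C y * X + 1) (by
    have : (X ^ 2 - C y * X + 1 : Polynomial ℂ).degree = 2 := by
      compute_degree!
    rw [this]; norm_num)
  have hz' : z ^ 2 - y * z + 1 = 0 := by simpa [IsRoot] using hz
  have hz0 : z ≠ 0 := by
    intro h; rw [h] at hz'; norm_num at hz'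
  have hy' : z + z⁻¹ = y := by
    field_simp
    linear_combination hz'
  have := Tf_eval d z hz0
  rw [h0] at this
  simp only [eval_zero] at this
  rw [hy'] at this
  exact hy (by
    have := this.symm
    rcases mul_eq_zero.mp this with h | h
    · exact absurd h (pow_ne_zero _ hz0)
    · exact h)

lemma key : ∀ n : ℕ, ∀ d : Polynomial ℂ, d ≠ 0 → d.natDegree = n → ∀ lam : ℂ, lam ≠ 0 →
    rootMultiplicity lam (Tf d) =
      (if lam = 1 ∨ lam = -1 then 2 else 1) * rootMultiplicity (lam + lam⁻¹) d := by
  intro n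
  induction n using Nat.strong_induction_on with
  | _ n IH =>
    intro d hd hdeg lam hlam
    set y₀ := lam + lam⁻¹ with hy₀
    by_cases hroot : d.eval y₀ = 0
    · -- split off factor
      have hd1 : 1 ≤ d.natDegree := by
        by_contra h
        push_neg at h
        interval_cases h' : d.natDegree
        · have := Polynomial.eq_C_of_natDegree_eq_zero h'
          rw [this] at hroot
          simp at hroot
          rw [this, hroot] at hd
          simp at hd
      set e := d /ₘ (X - C y₀) with he
      have hde : (X - C y₀) * e = d := Polynomial.mul_divByMonic_eq_iff_isRoot.mpr hroot
      have he0 : e ≠ 0 := by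
        intro h; rw [h, mul_zero] at hde; exact hd hde.symm
      have hedeg : e.natDegree = d.natDegree - 1 := by
        have := Polynomial.natDegree_mul (p := X - C y₀) (q := e) (by
          exact X_sub_C_ne_zero y₀) he0
        rw [hde, natDegree_X_sub_C] at this
        omega
      -- Tf d = (X^2 - C y₀ * X + 1) * Tf e
      have hfact : Tf d = (X ^ 2 - C y₀ * X + 1) * Tf e := by
        apply Polynomial.eq_of_infinite_eval_eq
        apply Set.Infinite.mono (s := {(0:ℂ)}ᶜ)
        swap
        · exact (Set.finite_singleton 0).infinite_compl
        intro x hx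
        have hx0 : x ≠ 0 := hx
        simp only [Set.mem_setOf_eq]
        rw [Tf_eval d x hx0, eval_mul, Tf_eval e x hx0]
        have heval : d.eval (x + x⁻¹) = (x + x⁻¹ - y₀) * e.eval (x + x⁻¹) := by
          rw [← hde]; simp [eval_mul]
        simp only [eval_add, eval_sub, eval_pow, eval_mul, eval_X, eval_C, eval_one]
        have hx2 : x ^ 2 - y₀ * x + 1 = x * (x + x⁻¹ - y₀) := by
          field_simp; ring
        rw [heval, hx2, hedeg]
        have : x ^ d.natDegree = x * x ^ (d.natDegree - 1) := by
          rw [← pow_succ']; congr 1; omega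
        rw [this]; ring
      have hQ0 : (X ^ 2 - C y₀ * X + 1 : Polynomial ℂ) ≠ 0 := by
        intro h
        have : (X ^ 2 - C y₀ * X + 1 : Polynomial ℂ).natDegree = 2 := by compute_degree!
        rw [h] at this; simp at this
      have hTe : Tf e ≠ 0 := Tf_ne_zero e he0
      -- Q factors as (X - C lam)(X - C lam⁻¹)
      have hQfact : (X ^ 2 - C y₀ * X + 1 : Polynomial ℂ) = (X - C lam) * (X - C lam⁻¹) := by
        have hinv : lam * lam⁻¹ = 1 := mul_inv_cancel₀ hlam
        rw [hy₀, C_add, show (1 : Polynomial ℂ) = C (lam * lam⁻¹) by rw [hinv, C_1], C_mul]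
        ring
      have hrmQ : rootMultiplicity lam (X ^ 2 - C y₀ * X + 1 : Polynomial ℂ) =
          if lam = 1 ∨ lam = -1 then 2 else 1 := by
        rw [hQfact, rootMultiplicity_mul (by rw [← hQfact]; exact hQ0)]
        rw [rootMultiplicity_X_sub_C, rootMultiplicity_X_sub_C]
        by_cases h1 : lam = 1 ∨ lam = -1
        · have : lam = lam⁻¹ := by
            rcases h1 with h | h <;> rw [h] <;> norm_num [inv_neg]
          simp [h1, this.symm]
        · have : lam ≠ lam⁻¹ := by
            intro h
            have : lam * lam = 1 := by
              nth_rewrite 2 [h]; exact mul_inv_cancel₀ hlam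
            have : (lam - 1) * (lam + 1) = 0 := by ring_nf; linear_combination this
            rcases mul_eq_zero.mp this with h' | h'
            · exact h1 (Or.inl (sub_eq_zero.mp h'))
            · exact h1 (Or.inr (eq_neg_of_add_eq_zero_left h'))
          simp [h1, this]
      rw [hfact, rootMultiplicity_mul (mul_ne_zero hQ0 hTe), hrmQ]
      rw [IH (n - 1) (by omega) e he0 (by omega) lam hlam]
      rw [← hde, rootMultiplicity_mul (by rw [hde]; exact hd)]
      rw [rootMultiplicity_X_sub_C]
      norm_num
      split <;> ring
    · -- no root
      rw [rootMultiplicity_eq_zero hroot, mul_zero]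
      apply rootMultiplicity_eq_zero
      intro h
      rw [IsRoot, Tf_eval d lam hlam] at h
      rcases mul_eq_zero.mp h with h | h
      · exact hlam ((pow_eq_zero_iff'.mp h).1)
      · exact hroot h

/-- **Root multiplicities under the Dickson transformation `y = λ + λ⁻¹`.**
Let `d ∈ ℂ[y]` be nonzero, `m ≥ deg d`, and let `p ∈ ℂ[λ]` satisfy
`p(λ) = λ^m d(λ + λ⁻¹)` for all `λ ≠ 0`.  Then (i) for `λ₀ ∉ {0, 1, -1}` the multiplicity
of `λ₀` as a root of `p` equals the multiplicity of `y₀ = λ₀ + λ₀⁻¹` as a root of `d`, and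
(ii) the multiplicity of `λ₀ = ±1` as a root of `p` is twice the multiplicity of
`y₀ = ±2` as a root of `d`. -/
theorem stmt12 (d : Polynomial ℂ) (hd : d ≠ 0) (m : ℕ) (hm : d.natDegree ≤ m)
    (p : Polynomial ℂ)
    (hp : ∀ lam : ℂ, lam ≠ 0 → p.eval lam = lam ^ m * d.eval (lam + lam⁻¹)) :
    (∀ lam : ℂ, lam ≠ 0 → lam ≠ 1 → lam ≠ -1 →
        Polynomial.rootMultiplicity lam p = Polynomial.rootMultiplicity (lam + lam⁻¹) d) ∧
      Polynomial.rootMultiplicity 1 p = 2 * Polynomial.rootMultiplicity 2 d ∧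
      Polynomial.rootMultiplicity (-1) p = 2 * Polynomial.rootMultiplicity (-2) d := by
  have hpfact : p = X ^ (m - d.natDegree) * Tf d := by
    apply Polynomial.eq_of_infinite_eval_eq
    apply Set.Infinite.mono (s := {(0:ℂ)}ᶜ)
    swap
    · exact (Set.finite_singleton 0).infinite_compl
    intro x hx
    have hx0 : x ≠ 0 := hx
    simp only [Set.mem_setOf_eq, eval_mul, eval_pow, eval_X]
    rw [hp x hx0, Tf_eval d x hx0, ← mul_assoc, ← pow_add]
    congr 2
    omega
  have hkey : ∀ lam : ℂ, lam ≠ 0 →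
      rootMultiplicity lam p =
        (if lam = 1 ∨ lam = -1 then 2 else 1) * rootMultiplicity (lam + lam⁻¹) d := by
    intro lam hlam
    rw [hpfact, rootMultiplicity_mul (mul_ne_zero (pow_ne_zero _ X_ne_zero) (Tf_ne_zero d hd))]
    have : rootMultiplicity lam (X ^ (m - d.natDegree) : Polynomial ℂ) = 0 := by
      apply rootMultiplicity_eq_zero
      simp [IsRoot, pow_ne_zero, hlam]
    rw [this, zero_add, key d.natDegree d hd rfl lam hlam]
  refine ⟨fun lam h0 h1 hm1 => ?_, ?_, ?_⟩
  · rw [hkey lam h0, if_neg (by tauto), one_mul]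
  · have := hkey 1 one_ne_zero
    norm_num at this
    simpa using this
  · have := hkey (-1) (by norm_num)
    norm_num at this
    exact this
end

section
/- Let B, C ∈ ℂ^{n×n} with B symmetric (B^T = B) and C skew-symmetric (C^T = −C), and let w ∈ ℂ. Then det [[B, w²C],[C, B]] = ( det(B + wC) )², where [[B, w²C],[C, B]] denotes the 2n×2n block matrix with blocks B, w²C, C, B. -/
open Matrix

/-- **Block determinant of the symmetric/skew-symmetric structure is a perfect square:**
if `Bᵀ = B` and `Cᵀ = -C`, then `det [[B, w²C],[C, B]] = (det(B + wC))²`. -/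
theorem stmt16 (n : ℕ) (B C : Matrix (Fin n) (Fin n) ℂ)
    (hB : Bᵀ = B) (hC : Cᵀ = -C) (w : ℂ) :
    (Matrix.fromBlocks B ((w ^ 2) • C) C B).det = (B + w • C).det ^ 2 := by
  have key : (Matrix.fromBlocks (1 : Matrix (Fin n) (Fin n) ℂ) (w • 1) 0 1) *
      (Matrix.fromBlocks B ((w ^ 2) • C) C B) *
      (Matrix.fromBlocks (1 : Matrix (Fin n) (Fin n) ℂ) ((-w) • 1) 0 1) =
      Matrix.fromBlocks (B + w • C) 0 C (B - w • C) := by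
    simp [Matrix.fromBlocks_multiply, Matrix.smul_mul, Matrix.mul_smul, smul_smul]
    constructor
    · ring_nf; abel
    · abel
  have h1 : (Matrix.fromBlocks (1 : Matrix (Fin n) (Fin n) ℂ) (w • (1:Matrix (Fin n) (Fin n) ℂ)) 0 1).det = 1 := by
    simp [Matrix.det_fromBlocks_zero₂₁]
  have h2 : (Matrix.fromBlocks (1 : Matrix (Fin n) (Fin n) ℂ) ((-w) • (1:Matrix (Fin n) (Fin n) ℂ)) 0 1).det = 1 := by
    simp [Matrix.det_fromBlocks_zero₂₁]
  have hdet := congrArg Matrix.det key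
  rw [Matrix.det_mul, Matrix.det_mul, h1, h2, one_mul, mul_one,
    Matrix.det_fromBlocks_zero₁₂] at hdet
  have htr : (B - w • C).det = (B + w • C).det := by
    rw [← Matrix.det_transpose (B - w • C), Matrix.transpose_sub, hB,
      Matrix.transpose_smul, hC]
    rw [smul_neg, sub_neg_eq_add]
  rw [hdet, htr, sq]
end

section
/- Let B(y), C(y) be n×n matrices over the polynomial ring ℂ[y] such that every coefficient matrix of B is symmetric and every coefficient matrix of C is skew-symmetric, and define the 2n×2n matrix polynomial M(y) = [[B(y), (y² − 4)C(y)],[C(y), B(y)]]. Then there exists a polynomial p(y) ∈ ℂ[y] such that det M(y) = p(y)² as polynomials in y. -/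
set_option maxHeartbeats 1000000

open Matrix Polynomial

noncomputable def aP : Polynomial ℂ := Polynomial.X ^ 2 - Polynomial.C 4
noncomputable def fP : Polynomial (Polynomial ℂ) := Polynomial.X ^ 2 - Polynomial.C aP
noncomputable abbrev AA : Type := AdjoinRoot fP
noncomputable def φP : Polynomial ℂ →+* AA := algebraMap _ _
noncomputable def sP : AA := AdjoinRoot.root fP

lemma fP_monic : fP.Monic := Polynomial.monic_X_pow_sub_C aP two_ne_zero

lemma fP_degree : fP.degree = 2 := Polynomial.degree_X_pow_sub_C (by norm_num) aP

lemma sP_sq : sP * sP = φP aP := by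
  have h0 : (AdjoinRoot.mk fP) (Polynomial.X ^ 2 - Polynomial.C aP) = 0 := AdjoinRoot.mk_self
  rw [map_sub, map_pow, AdjoinRoot.mk_X, AdjoinRoot.mk_C, sub_eq_zero] at h0
  show AdjoinRoot.root fP * AdjoinRoot.root fP = φP aP
  rw [← sq, h0]
  rfl

lemma fP_eval_neg : fP.eval₂ φP (-sP) = 0 := by
  show Polynomial.eval₂ φP (-sP) (Polynomial.X ^ 2 - Polynomial.C aP) = 0
  simp only [Polynomial.eval₂_sub, Polynomial.eval₂_pow, Polynomial.eval₂_X, Polynomial.eval₂_C]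
  rw [show ((-sP) ^ 2 : AA) = sP * sP by ring, sP_sq, sub_self]

noncomputable def σP : AA →+* AA := AdjoinRoot.lift φP (-sP) fP_eval_neg

lemma σP_φ (r : Polynomial ℂ) : σP (φP r) = φP r := by
  have h : φP r = AdjoinRoot.of fP r := rfl
  rw [h]
  exact AdjoinRoot.lift_of fP_eval_neg

lemma σP_s : σP sP = -sP := AdjoinRoot.lift_root fP_eval_neg

/-- **The determinant of `M(y) = [[B(y), (y²-4)C(y)],[C(y), B(y)]]` is a perfect square**
whenever `B(y)` is a symmetric and `C(y)` a skew-symmetric matrix polynomial: there is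
`p(y) ∈ ℂ[y]` with `det M(y) = p(y)²`. -/
theorem stmt17 (n : ℕ) (Bm Cm : Matrix (Fin n) (Fin n) (Polynomial ℂ))
    (hB : Bmᵀ = Bm) (hC : Cmᵀ = -Cm) :
    ∃ p : Polynomial ℂ,
      (Matrix.fromBlocks Bm
        (((Polynomial.X ^ 2 - Polynomial.C 4 : Polynomial ℂ)) • Cm) Cm Bm).det = p ^ 2 := by
  set B' : Matrix (Fin n) (Fin n) AA := Bm.map φP with hB'
  set C' : Matrix (Fin n) (Fin n) AA := Cm.map φP with hC'
  have key : (Matrix.fromBlocks B' (φP aP • C') C' B') * (Matrix.fromBlocks 1 (sP • 1) 0 1)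
      = (Matrix.fromBlocks 1 (sP • 1) 0 1) *
        (Matrix.fromBlocks (B' - sP • C') 0 C' (B' + sP • C')) := by
    simp only [Matrix.fromBlocks_multiply, Matrix.mul_one, Matrix.one_mul, Matrix.mul_zero,
      Matrix.zero_mul, Matrix.mul_smul, Matrix.smul_mul, add_zero, zero_add, sub_add_cancel]
    rw [smul_add, smul_smul, sP_sq, add_comm B' (sP • C')]
  have hdetT : (Matrix.fromBlocks (1 : Matrix (Fin n) (Fin n) AA) (sP • 1) (0 : Matrix (Fin n) (Fin n) AA) 1).det = 1 := by
    rw [Matrix.det_fromBlocks_zero₂₁ (1 : Matrix (Fin n) (Fin n) AA) (sP • 1) 1]; simp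
  have hsymm : (B' + sP • C')ᵀ = B' - sP • C' := by
    rw [Matrix.transpose_add, Matrix.transpose_smul, hB', hC', ← Matrix.transpose_map,
      ← Matrix.transpose_map, hB, hC]
    have h1 : (-Cm).map φP = -(Cm.map φP) := by ext i j; simp
    rw [h1, smul_neg, sub_eq_add_neg]
  set d : AA := (B' + sP • C').det with hd
  have hdet2 : (B' - sP • C').det = d := by rw [← hsymm, Matrix.det_transpose]
  have hMdet : φP ((Matrix.fromBlocks Bm (aP • Cm) Cm Bm).det) = d * d := by
    have hmap : (Matrix.fromBlocks Bm (aP • Cm) Cm Bm).map φP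
        = Matrix.fromBlocks B' (φP aP • C') C' B' := by
      have hsm : (aP • Cm).map ⇑φP = φP aP • C' := by
        ext i j
        simp only [Matrix.map_apply, Matrix.smul_apply, smul_eq_mul, _root_.map_mul, hC']
      rw [Matrix.fromBlocks_map, hsm, hB', hC']
    have h2 := congrArg Matrix.det key
    rw [Matrix.det_mul, Matrix.det_mul, hdetT, mul_one, one_mul,
      Matrix.det_fromBlocks_zero₁₂, hdet2] at h2
    rw [RingHom.map_det, RingHom.mapMatrix_apply, hmap, h2, hd]
  have hσd : σP d = d := by
    have hmapσ : (B' + sP • C').map σP = B' - sP • C' := by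
      ext i j
      simp only [Matrix.map_apply, Matrix.add_apply, Matrix.smul_apply, Matrix.sub_apply,
        smul_eq_mul, map_add]
      show σP (φP (Bm i j)) + σP (sP * φP (Cm i j)) = φP (Bm i j) - sP * φP (Cm i j)
      rw [σP_φ, _root_.map_mul, σP_s, σP_φ]
      ring
    rw [hd, RingHom.map_det, RingHom.mapMatrix_apply, hmapσ, hdet2]
  obtain ⟨q₀, hq₀⟩ := AdjoinRoot.mk_surjective d
  set q : Polynomial (Polynomial ℂ) := q₀ %ₘ fP with hqdef
  have hq : AdjoinRoot.mk fP q = d := by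
    rw [← hq₀, AdjoinRoot.mk_eq_mk, hqdef, Polynomial.modByMonic_eq_sub_mul_div _ fP]
    exact ⟨-(q₀ /ₘ fP), by ring⟩
  have hqdeg : q.degree < 2 := fP_degree ▸ Polynomial.degree_modByMonic_lt q₀ fP_monic
  have hqdeg1 : q.degree ≤ 1 := by
    by_cases h0 : q = 0
    · rw [h0]; simp
    · rw [Polynomial.degree_eq_natDegree h0] at hqdeg ⊢
      exact_mod_cast Nat.lt_succ_iff.mp (by exact_mod_cast hqdeg)
  have hqform : q = Polynomial.C (q.coeff 1) * Polynomial.X + Polynomial.C (q.coeff 0) :=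
    Polynomial.eq_X_add_C_of_degree_le_one hqdeg1
  set p₁ := q.coeff 1 with hp₁def
  set p₀ := q.coeff 0 with hp₀def
  have hp₁ : p₁ = 0 := by
    have hσmk : σP d = AdjoinRoot.mk fP (Polynomial.C p₀ - Polynomial.C p₁ * Polynomial.X) := by
      rw [← hq]
      show AdjoinRoot.lift φP (-sP) fP_eval_neg (AdjoinRoot.mk fP q) = _
      rw [AdjoinRoot.lift_mk]
      conv_lhs => rw [hqform]
      simp only [Polynomial.eval₂_add, Polynomial.eval₂_mul, Polynomial.eval₂_C,
        Polynomial.eval₂_X, map_sub, _root_.map_mul, AdjoinRoot.mk_C, AdjoinRoot.mk_X]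
      show φP p₁ * -sP + φP p₀ = AdjoinRoot.of fP p₀ - AdjoinRoot.of fP p₁ * AdjoinRoot.root fP
      have e1 : φP p₁ = AdjoinRoot.of fP p₁ := rfl
      have e2 : φP p₀ = AdjoinRoot.of fP p₀ := rfl
      have e3 : sP = AdjoinRoot.root fP := rfl
      rw [e1, e2, e3]; ring
    rw [hσd, ← hq, AdjoinRoot.mk_eq_mk] at hσmk
    have hdiff : q - (Polynomial.C p₀ - Polynomial.C p₁ * Polynomial.X)
        = Polynomial.C (2 * p₁) * Polynomial.X := by
      conv_lhs => rw [hqform]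
      rw [Polynomial.C_mul, map_ofNat]
      ring
    rw [hdiff] at hσmk
    have hz : Polynomial.C (2 * p₁) * Polynomial.X = 0 := by
      refine Polynomial.eq_zero_of_dvd_of_degree_lt hσmk ?_
      rw [fP_degree]
      calc (Polynomial.C (2 * p₁) * Polynomial.X).degree
          ≤ (0 : WithBot ℕ) + 1 := (Polynomial.degree_mul_le _ _).trans
            (add_le_add Polynomial.degree_C_le Polynomial.degree_X_le)
        _ < 2 := by norm_num
    have h1 := congrArg (fun r => Polynomial.coeff r 1) hz
    simp only [Polynomial.coeff_C_mul, Polynomial.coeff_X_one, mul_one,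
      Polynomial.coeff_zero] at h1
    rcases mul_eq_zero.mp h1 with h | h
    · exact absurd h two_ne_zero
    · exact h
  refine ⟨p₀, ?_⟩
  show (Matrix.fromBlocks Bm (aP • Cm) Cm Bm).det = p₀ ^ 2
  have hsq : AdjoinRoot.mk fP (Polynomial.C ((Matrix.fromBlocks Bm (aP • Cm) Cm Bm).det)
      - Polynomial.C (p₀ ^ 2)) = 0 := by
    rw [map_sub, AdjoinRoot.mk_C, AdjoinRoot.mk_C]
    have e3 : AdjoinRoot.of fP ((Matrix.fromBlocks Bm (aP • Cm) Cm Bm).det)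
        = φP ((Matrix.fromBlocks Bm (aP • Cm) Cm Bm).det) := rfl
    rw [e3, hMdet, ← hq]
    conv_lhs => rw [hqform, hp₁]
    simp only [map_zero, zero_mul, zero_add, AdjoinRoot.mk_C]
    have e4 : AdjoinRoot.of fP (p₀ ^ 2) = AdjoinRoot.of fP p₀ * AdjoinRoot.of fP p₀ := by
      rw [sq]; exact _root_.map_mul _ _ _
    rw [e4]
    ring
  rw [AdjoinRoot.mk_eq_zero] at hsq
  have hz2 : Polynomial.C ((Matrix.fromBlocks Bm (aP • Cm) Cm Bm).det)
      - Polynomial.C (p₀ ^ 2) = 0 := by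
    refine Polynomial.eq_zero_of_dvd_of_degree_lt hsq ?_
    rw [fP_degree]
    calc (Polynomial.C ((Matrix.fromBlocks Bm (aP • Cm) Cm Bm).det)
        - Polynomial.C (p₀ ^ 2)).degree
        ≤ 0 := by rw [← Polynomial.C_sub]; exact Polynomial.degree_C_le
      _ < 2 := by norm_num
  rw [← Polynomial.C_sub, Polynomial.C_eq_zero, sub_eq_zero] at hz2
  exact hz2
end

section
/- Let P(λ) = Σ_{j=−k}^{k} A_j λ^j be an n×n complex T-palindromic Laurent matrix polynomial, i.e. A_{−j} = A_j^T for all j, such that the polynomial λ^{nk}·det P(λ) is not identically zero. Let B(y), C(y) be n×n matrix polynomials over ℂ[y] such that for all λ ≠ 0, P(λ) = B(λ + λ^{−1}) + (λ − λ^{−1})·C(λ + λ^{−1}), and define the 2n×2n matrix polynomial M(y) = [[B(y), (y² − 4)C(y)],[C(y), B(y)]]. Then for every λ_0 ∈ ℂ with λ_0 ∉ {0, 1, −1}, the multiplicity of y_0 = λ_0 + λ_0^{−1} as a root of det M(y) equals twice the multiplicity of λ_0 as a root of the polynomial λ^{nk}·det P(λ). -/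
open Matrix Polynomial

noncomputable def rc (g : Polynomial ℂ) : Polynomial ℂ :=
  ∑ i ∈ g.support, Polynomial.C (g.coeff i) * Polynomial.X ^ (g.natDegree - i)
    * (Polynomial.X ^ 2 + 1) ^ i

lemma rc_eval (g : Polynomial ℂ) (x : ℂ) (hx : x ≠ 0) :
    (rc g).eval x = x ^ g.natDegree * g.eval (x + x⁻¹) := by
  rw [rc, Polynomial.eval_finset_sum, Polynomial.eval_eq_sum, Polynomial.sum_def,
    Finset.mul_sum]
  refine Finset.sum_congr rfl fun i hi => ?_
  have hid : i ≤ g.natDegree :=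
    Polynomial.le_natDegree_of_ne_zero (Polynomial.mem_support_iff.mp hi)
  have h1 : (x ^ 2 + 1) = x * (x + x⁻¹) := by field_simp
  simp only [Polynomial.eval_mul, Polynomial.eval_pow, Polynomial.eval_C, Polynomial.eval_X,
    Polynomial.eval_add, Polynomial.eval_one]
  rw [h1, mul_pow,
    show x ^ g.natDegree = x ^ (g.natDegree - i) * x ^ i by
      rw [← pow_add, Nat.sub_add_cancel hid]]
  ring

lemma rm_pow (m : ℕ) (φ : Polynomial ℂ) (hφ : φ ≠ 0) (a : ℂ) :
    Polynomial.rootMultiplicity a (φ ^ m) = m * Polynomial.rootMultiplicity a φ := by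
  induction m with
  | zero => simp
  | succ m ih =>
    rw [pow_succ, Polynomial.rootMultiplicity_mul (mul_ne_zero (pow_ne_zero _ hφ) hφ), ih]
    ring

lemma det_blocks (n : ℕ) (Be Ce : Matrix (Fin n) (Fin n) ℂ) (s : ℂ) (hs : s ≠ 0) :
    (Matrix.fromBlocks Be ((s ^ 2) • Ce) Ce Be).det =
      (Be + s • Ce).det * (Be - s • Ce).det := by
  set L : Matrix (Fin n ⊕ Fin n) (Fin n ⊕ Fin n) ℂ :=
    Matrix.fromBlocks 1 1 (s⁻¹ • 1) (-(s⁻¹) • 1) with hL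
  have hdetL : L.det = (-(2 * s⁻¹)) ^ n := by
    rw [hL, Matrix.det_fromBlocks_one₁₁]
    rw [show (-(s⁻¹) • 1 - s⁻¹ • (1 : Matrix (Fin n) (Fin n) ℂ) * 1 : Matrix (Fin n) (Fin n) ℂ)
        = (-(2 * s⁻¹)) • 1 by
      rw [Matrix.mul_one, ← sub_smul]; congr 1; ring]
    rw [Matrix.det_smul, Matrix.det_one, mul_one, Fintype.card_fin]
  have hmul : (Matrix.fromBlocks Be ((s ^ 2) • Ce) Ce Be) * L =
      L * Matrix.fromBlocks (Be + s • Ce) 0 0 (Be - s • Ce) := by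
    rw [hL, Matrix.fromBlocks_multiply, Matrix.fromBlocks_multiply, Matrix.fromBlocks_inj]
    refine ⟨?_, ?_, ?_, ?_⟩ <;>
      simp only [Matrix.mul_one, Matrix.one_mul, Matrix.mul_zero, Matrix.zero_mul,
        Matrix.mul_smul, Matrix.smul_mul, Matrix.one_mul, smul_smul, add_zero, zero_add,
        smul_add, smul_sub, neg_smul, smul_neg, Matrix.neg_mul, Matrix.mul_neg] <;>
      match_scalars <;> field_simp <;> ring
  have hdet := congrArg Matrix.det hmul
  rw [Matrix.det_mul, Matrix.det_mul, Matrix.det_fromBlocks_zero₂₁] at hdet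
  have hLne : L.det ≠ 0 := by
    rw [hdetL]; exact pow_ne_zero _ (by simp [hs])
  exact mul_left_cancel₀ hLne (by linear_combination hdet)

lemma sq_ne_one_of (z : ℂ) (h1 : z ≠ 1) (hm1 : z ≠ -1) : z ^ 2 ≠ 1 := by
  intro h
  have h0 : (z - 1) * (z + 1) = 0 := by linear_combination h
  rcases mul_eq_zero.mp h0 with h' | h'
  · exact h1 (sub_eq_zero.mp h')
  · exact hm1 (eq_neg_of_add_eq_zero_left h')


/-- **Eigenvalue multiplicities of the doubled Dickson-basis polynomial `M(y)`.**  Let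
`P(λ) = Σ_{j=-k}^k A_j λ^j` be T-palindromic (`A_{-j} = A_jᵀ`), with
`q(λ) = λ^{nk} det P(λ)` not identically zero.  Let `B(y), C(y)` be matrix polynomials
with `P(λ) = B(λ + λ⁻¹) + (λ - λ⁻¹)·C(λ + λ⁻¹)` for all `λ ≠ 0`, and let
`M(y) = [[B(y), (y² - 4)C(y)],[C(y), B(y)]]`.  Then for every `λ₀ ∉ {0, 1, -1}`, the
multiplicity of `y₀ = λ₀ + λ₀⁻¹` as a root of `det M(y)` is twice the multiplicity of
`λ₀` as a root of `q`. -/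
theorem stmt19 (n k : ℕ)
    (A : ℤ → Matrix (Fin n) (Fin n) ℂ)
    (hpal : ∀ j : ℤ, A (-j) = (A j)ᵀ)
    (P : ℂ → Matrix (Fin n) (Fin n) ℂ)
    (hP : ∀ z : ℂ, z ≠ 0 → P z = ∑ j ∈ Finset.Icc (-(k : ℤ)) (k : ℤ), z ^ j • A j)
    (q : Polynomial ℂ) (hq : q ≠ 0)
    (hqdef : ∀ z : ℂ, z ≠ 0 → q.eval z = z ^ (n * k) * (P z).det)
    (Bm Cm : Matrix (Fin n) (Fin n) (Polynomial ℂ))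
    (hBC : ∀ lam : ℂ, lam ≠ 0 →
      P lam = Bm.map (Polynomial.eval (lam + lam⁻¹)) +
        (lam - lam⁻¹) • Cm.map (Polynomial.eval (lam + lam⁻¹)))
    (M : Matrix (Fin n ⊕ Fin n) (Fin n ⊕ Fin n) (Polynomial ℂ))
    (hM : M = Matrix.fromBlocks Bm
      (((Polynomial.X ^ 2 - Polynomial.C 4 : Polynomial ℂ)) • Cm) Cm Bm)
    (lam : ℂ) (hlam : lam ≠ 0) (h1 : lam ≠ 1) (hm1 : lam ≠ -1) :
    Polynomial.rootMultiplicity (lam + lam⁻¹) M.det =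
      2 * Polynomial.rootMultiplicity lam q := by
  have hlam2 : lam ^ 2 ≠ 1 := sq_ne_one_of lam h1 hm1
  -- the set of good points is infinite
  have hinf : Set.Infinite {z : ℂ | z ≠ 0 ∧ z ≠ 1 ∧ z ≠ -1} := by
    have hfin : ({0, 1, -1} : Set ℂ).Finite := by
      exact (Set.finite_singleton _).insert _ |>.insert _
    refine hfin.infinite_compl.mono ?_
    intro z hz
    simp only [Set.mem_compl_iff, Set.mem_insert_iff, Set.mem_singleton_iff] at hz
    push_neg at hz
    exact ⟨hz.1, hz.2.1, hz.2.2⟩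
  -- palindromicity: P z⁻¹ = (P z)ᵀ
  have hPT : ∀ z : ℂ, z ≠ 0 → P z⁻¹ = (P z)ᵀ := by
    intro z hz
    rw [hP _ (inv_ne_zero hz), hP _ hz, Matrix.transpose_sum]
    refine Finset.sum_equiv (Equiv.neg ℤ) (fun i => by simp [Equiv.neg_apply]; omega) ?_
    intro j hj
    rw [Matrix.transpose_smul, Equiv.neg_apply, hpal, Matrix.transpose_transpose]
    congr 1
    rw [_root_.zpow_neg, ← _root_.inv_zpow]
  -- key pointwise identity
  have key : ∀ z : ℂ, z ≠ 0 → z ≠ 1 → z ≠ -1 →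
      M.det.eval (z + z⁻¹) = ((P z).det) ^ 2 := by
    intro z hz hz1 hzm1
    have hz2 : z ^ 2 ≠ 1 := sq_ne_one_of z hz1 hzm1
    have hs : z - z⁻¹ ≠ 0 := by
      intro h
      apply hz2
      have hzz : z = z⁻¹ := sub_eq_zero.mp h
      field_simp at hzz
      exact hzz
    have hs2 : (z + z⁻¹) ^ 2 - 4 = (z - z⁻¹) ^ 2 := by
      field_simp
      ring
    have hmapdet : M.det.eval (z + z⁻¹) = (M.map (Polynomial.eval (z + z⁻¹))).det := by
      have h := RingHom.map_det (Polynomial.evalRingHom (z + z⁻¹)) M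
      simpa using h
    have hMm : M.map (Polynomial.eval (z + z⁻¹)) =
        Matrix.fromBlocks (Bm.map (Polynomial.eval (z + z⁻¹)))
          (((z - z⁻¹) ^ 2) • Cm.map (Polynomial.eval (z + z⁻¹)))
          (Cm.map (Polynomial.eval (z + z⁻¹))) (Bm.map (Polynomial.eval (z + z⁻¹))) := by
      rw [hM, Matrix.fromBlocks_map, Matrix.fromBlocks_inj]
      refine ⟨rfl, ?_, rfl, rfl⟩
      ext i j
      simp only [Matrix.map_apply, Matrix.smul_apply, smul_eq_mul, Polynomial.eval_mul,
        Polynomial.eval_sub, Polynomial.eval_pow, Polynomial.eval_X, Polynomial.eval_C]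
      rw [hs2]
    have hdb := det_blocks n (Bm.map (Polynomial.eval (z + z⁻¹)))
      (Cm.map (Polynomial.eval (z + z⁻¹))) (z - z⁻¹) hs
    have hBp : Bm.map (Polynomial.eval (z + z⁻¹)) +
        (z - z⁻¹) • Cm.map (Polynomial.eval (z + z⁻¹)) = P z := (hBC z hz).symm
    have hBm' : Bm.map (Polynomial.eval (z + z⁻¹)) -
        (z - z⁻¹) • Cm.map (Polynomial.eval (z + z⁻¹)) = P z⁻¹ := by
      have h2 := hBC z⁻¹ (inv_ne_zero hz)
      rw [inv_inv] at h2
      rw [show z⁻¹ + z = z + z⁻¹ from add_comm _ _] at h2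
      rw [h2]
      rw [show z⁻¹ - z = -(z - z⁻¹) from by ring, neg_smul, sub_eq_add_neg]
    rw [hmapdet, hMm, hdb, hBp, hBm', hPT z hz, Matrix.det_transpose, sq]
  -- global polynomial identity
  set g := M.det with hg
  have hqkey : ∀ z : ℂ, z ≠ 0 → z ≠ 1 → z ≠ -1 →
      (q.eval z) ^ 2 = z ^ (2 * (n * k)) * g.eval (z + z⁻¹) := by
    intro z hz hz1 hzm1
    rw [key z hz hz1 hzm1, hqdef z hz, mul_pow, ← pow_mul, Nat.mul_comm (n*k) 2]
  have hpoly : q ^ 2 * Polynomial.X ^ g.natDegree =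
      Polynomial.X ^ (2 * (n * k)) * rc g := by
    apply Polynomial.eq_of_infinite_eval_eq
    refine hinf.mono ?_
    rintro z ⟨hz, hz1, hzm1⟩
    simp only [Set.mem_setOf_eq, Polynomial.eval_mul, Polynomial.eval_pow, Polynomial.eval_X]
    rw [rc_eval g z hz, hqkey z hz hz1 hzm1]
    ring
  have hg0 : g ≠ 0 := by
    intro h
    apply hq
    have hrc : rc g = 0 := by rw [h, rc]; simp
    rw [hrc, mul_zero, mul_eq_zero] at hpoly
    rcases hpoly with h' | h'
    · exact pow_eq_zero_iff (by norm_num) |>.mp h'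
    · exact absurd h' (pow_ne_zero _ Polynomial.X_ne_zero)
  set m := Polynomial.rootMultiplicity (lam + lam⁻¹) g with hm
  set u := g /ₘ (Polynomial.X - Polynomial.C (lam + lam⁻¹)) ^ m with hu
  have hfac : (Polynomial.X - Polynomial.C (lam + lam⁻¹)) ^ m * u = g :=
    Polynomial.pow_mul_divByMonic_rootMultiplicity_eq g _
  have hueval : u.eval (lam + lam⁻¹) ≠ 0 :=
    Polynomial.eval_divByMonic_pow_rootMultiplicity_ne_zero _ hg0
  have hu0 : u ≠ 0 := fun h => hueval (by rw [h]; simp)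
  have hdeg : g.natDegree = m + u.natDegree := by
    rw [← hfac, Polynomial.natDegree_mul (pow_ne_zero _ (Polynomial.X_sub_C_ne_zero _)) hu0,
      Polynomial.natDegree_pow, Polynomial.natDegree_X_sub_C, mul_one]
  set φ : Polynomial ℂ := (Polynomial.X - Polynomial.C lam) *
    (Polynomial.X - Polynomial.C lam⁻¹) with hφ
  have hφ0 : φ ≠ 0 :=
    mul_ne_zero (Polynomial.X_sub_C_ne_zero _) (Polynomial.X_sub_C_ne_zero _)
  have hφeval : ∀ z : ℂ, z ≠ 0 → φ.eval z = z * (z + z⁻¹ - (lam + lam⁻¹)) := by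
    intro z hz
    have h1' : lam * lam⁻¹ = 1 := mul_inv_cancel₀ hlam
    have h2' : z * z⁻¹ = 1 := mul_inv_cancel₀ hz
    simp only [hφ, Polynomial.eval_mul, Polynomial.eval_sub, Polynomial.eval_X,
      Polynomial.eval_C]
    field_simp
    ring
  have hrcfac : rc g = φ ^ m * rc u := by
    apply Polynomial.eq_of_infinite_eval_eq
    refine hinf.mono ?_
    rintro z ⟨hz, hz1, hzm1⟩
    simp only [Set.mem_setOf_eq]
    rw [rc_eval g z hz, Polynomial.eval_mul, Polynomial.eval_pow, rc_eval u z hz,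
      hφeval z hz, hdeg, ← hfac]
    simp only [Polynomial.eval_mul, Polynomial.eval_pow, Polynomial.eval_sub,
      Polynomial.eval_X, Polynomial.eval_C]
    rw [mul_pow, pow_add]
    ring
  have hlaminv : lam - lam⁻¹ ≠ 0 := by
    intro h
    apply hlam2
    have hzz : lam = lam⁻¹ := sub_eq_zero.mp h
    field_simp at hzz
    exact hzz
  have hrcu_eval : (rc u).eval lam ≠ 0 := by
    rw [rc_eval u lam hlam]
    exact mul_ne_zero (pow_ne_zero _ hlam) hueval
  have hrcu0 : rc u ≠ 0 := fun h => hrcu_eval (by rw [h]; simp)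
  have hφm : Polynomial.rootMultiplicity lam φ = 1 := by
    rw [hφ, Polynomial.rootMultiplicity_mul (mul_ne_zero (Polynomial.X_sub_C_ne_zero _)
      (Polynomial.X_sub_C_ne_zero _)), Polynomial.rootMultiplicity_X_sub_C_self,
      Polynomial.rootMultiplicity_eq_zero]
    · intro h
      simp only [Polynomial.IsRoot, Polynomial.eval_sub, Polynomial.eval_X,
        Polynomial.eval_C] at h
      exact hlaminv (by rw [sub_eq_zero] at h ⊢; exact h)
  have hrcg : Polynomial.rootMultiplicity lam (rc g) = m := by
    rw [hrcfac, Polynomial.rootMultiplicity_mul (mul_ne_zero (pow_ne_zero _ hφ0) hrcu0),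
      rm_pow m φ hφ0, hφm, mul_one,
      Polynomial.rootMultiplicity_eq_zero (fun h => hrcu_eval h), add_zero]
  -- conclude
  have hfinal := congrArg (Polynomial.rootMultiplicity lam) hpoly
  rw [Polynomial.rootMultiplicity_mul
      (mul_ne_zero (pow_ne_zero _ hq) (pow_ne_zero _ Polynomial.X_ne_zero)),
    Polynomial.rootMultiplicity_mul
      (mul_ne_zero (pow_ne_zero _ Polynomial.X_ne_zero)
        (by rw [hrcfac]; exact mul_ne_zero (pow_ne_zero _ hφ0) hrcu0)),
    rm_pow 2 q hq, hrcg,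
    Polynomial.rootMultiplicity_eq_zero (p := Polynomial.X ^ g.natDegree)
      (by intro h
          simp only [Polynomial.IsRoot, Polynomial.eval_pow, Polynomial.eval_X] at h
          exact hlam (pow_eq_zero_iff'.mp h).1),
    Polynomial.rootMultiplicity_eq_zero (p := Polynomial.X ^ (2 * (n * k)))
      (by intro h
          simp only [Polynomial.IsRoot, Polynomial.eval_pow, Polynomial.eval_X] at h
          exact hlam (pow_eq_zero_iff'.mp h).1)] at hfinal
  omega
end
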